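/- arXiv:1103.3127 — 6 statements merged into one kernel-verified Lean document; each statement's English description precedes it below -/
import Mathlib

section
/- Let (E, ‖·‖) be a random normed module over K with base a nonatomic probability space (Ω, F, P), endowed with the locally L⁰-convex topology T_c, and let M = {x ∈ E : ∃ real m, 0 < m < 1, ‖x‖ < m a.s. on Ω}. Then the complement E \ M is T_c-open; that is, M is T_c-closed. -/
open MeasureTheory

/-- A random normed module over `𝕜` with base `(Ω, F, μ)`: a module over `L⁰(F, 𝕜)`
(scalars represented by `𝕜`-valued functions, with a.e. equal scalars acting equally)
together with an `L⁰`-norm with values in `L⁰₊` (represented by measurable real functions,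
with all relations holding almost everywhere). -/
structure RandomNormedModule (Ω : Type*) [MeasurableSpace Ω] (μ : Measure Ω)
    (𝕜 : Type*) [RCLike 𝕜] (E : Type*) [AddCommGroup E] where
  smul : (Ω → 𝕜) → E → E
  smul_congr : ∀ (ξ η : Ω → 𝕜) (x : E), ξ =ᵐ[μ] η → smul ξ x = smul η x
  one_smul : ∀ x : E, smul 1 x = x
  mul_smul : ∀ (ξ η : Ω → 𝕜) (x : E), smul (ξ * η) x = smul ξ (smul η x)
  smul_add : ∀ (ξ : Ω → 𝕜) (x y : E), smul ξ (x + y) = smul ξ x + smul ξ y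
  add_smul : ∀ (ξ η : Ω → 𝕜) (x : E), smul (ξ + η) x = smul ξ x + smul η x
  nrm : E → Ω → ℝ
  nrm_meas : ∀ x, Measurable (nrm x)
  nrm_nonneg : ∀ x, ∀ᵐ ω ∂μ, 0 ≤ nrm x ω
  nrm_add : ∀ x y, ∀ᵐ ω ∂μ, nrm (x + y) ω ≤ nrm x ω + nrm y ω
  nrm_smul : ∀ (ξ : Ω → 𝕜) (x : E), Measurable ξ →
      nrm (smul ξ x) =ᵐ[μ] fun ω => ‖ξ ω‖ * nrm x ω
  nrm_def : ∀ x : E, nrm x =ᵐ[μ] (fun _ => 0) → x = 0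

/-- `A` is an atom of the measure `μ`. -/
def IsPAtom {Ω : Type*} [MeasurableSpace Ω] (μ : Measure Ω) (A : Set Ω) : Prop :=
  MeasurableSet A ∧ 0 < μ A ∧
    ∀ B : Set Ω, MeasurableSet B → B ⊆ A → μ B = 0 ∨ μ (A \ B) = 0

variable {Ω : Type*} [MeasurableSpace Ω] {μ : Measure Ω} {𝕜 : Type*} [RCLike 𝕜]
  {E : Type*} [AddCommGroup E]

/-- The set `M = {x ∈ E : ∃ m ∈ (0,1), ‖x‖ < m a.s. on Ω}`. -/
def setM (μ : Measure Ω) (R : RandomNormedModule Ω μ 𝕜 E) : Set E :=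
  {x : E | ∃ m : ℝ, 0 < m ∧ m < 1 ∧ ∀ᵐ ω ∂μ, R.nrm x ω < m}


open scoped Classical in
private lemma exists_half_aux {Ω : Type*} [MeasurableSpace Ω] {μ : Measure Ω}
    (hna : ∀ A : Set Ω, ¬ IsPAtom μ A)
    {A : Set Ω} (hA : MeasurableSet A) (h : 0 < μ A) :
    ∃ B, MeasurableSet B ∧ B ⊆ A ∧ 0 < μ B ∧ μ B ≤ μ A / 2 := by
  have := hna A
  rw [IsPAtom] at this
  push_neg at this
  obtain ⟨B, hBm, hBA, hB1, hB2⟩ := this hA h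
  have hsum : μ B + μ (A \ B) = μ A := by
    rw [measure_add_diff hBm.nullMeasurableSet, Set.union_eq_self_of_subset_left hBA]
  rcases le_or_gt (μ B) (μ A / 2) with hle | hlt
  · exact ⟨B, hBm, hBA, pos_iff_ne_zero.2 hB1, hle⟩
  · refine ⟨A \ B, hA.diff hBm, Set.diff_subset, pos_iff_ne_zero.2 hB2, ?_⟩
    by_contra hgt
    push_neg at hgt
    have : μ A < μ B + μ (A \ B) := by
      calc μ A = μ A / 2 + μ A / 2 := (ENNReal.add_halves _).symm
      _ < μ B + μ (A \ B) := ENNReal.add_lt_add hlt hgt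
    rw [hsum] at this
    exact lt_irrefl _ this

private lemma exists_small_aux {Ω : Type*} [MeasurableSpace Ω] {μ : Measure Ω}
    (hna : ∀ A : Set Ω, ¬ IsPAtom μ A)
    {A : Set Ω} (hA : MeasurableSet A) (h : 0 < μ A) (n : ℕ) :
    ∃ B, MeasurableSet B ∧ B ⊆ A ∧ 0 < μ B ∧ μ B ≤ μ A * 2⁻¹ ^ n := by
  induction n with
  | zero => exact ⟨A, hA, le_refl _, h, by simp⟩
  | succ k ih =>
    obtain ⟨B, hBm, hBA, hB0, hBle⟩ := ih
    obtain ⟨C, hCm, hCB, hC0, hCle⟩ := exists_half_aux hna hBm hB0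
    refine ⟨C, hCm, hCB.trans hBA, hC0, hCle.trans ?_⟩
    rw [div_eq_mul_inv, pow_succ, ← mul_assoc]
    exact mul_le_mul_left hBle _

/-- If the base space is nonatomic, then `E \ M` is open for the locally `L⁰`-convex
topology, i.e. `M` is `T_c`-closed. -/
theorem setM_compl_Tc_open [IsProbabilityMeasure μ]
    (hna : ∀ A : Set Ω, ¬ IsPAtom μ A)
    (R : RandomNormedModule Ω μ 𝕜 E) :
    ∀ y ∉ setM μ R, ∃ ε : Ω → ℝ, Measurable ε ∧ (∀ᵐ ω ∂μ, 0 < ε ω) ∧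
      ∀ z : E, (∀ᵐ ω ∂μ, R.nrm z ω ≤ ε ω) → y + z ∉ setM μ R := by
  classical
  intro y hy
  have hpos : ∀ m : ℝ, 0 < m → m < 1 → 0 < μ {ω | m ≤ R.nrm y ω} := by
    intro m hm0 hm1
    have hne : ¬ ∀ᵐ ω ∂μ, R.nrm y ω < m := fun h => hy ⟨m, hm0, hm1, h⟩
    rw [ae_iff] at hne
    simp only [not_lt] at hne
    exact pos_iff_ne_zero.2 hne
  set mq : ℕ → ℝ := fun n => 1 - 1 / ((n : ℝ) + 2) with hmq
  have hmq0 : ∀ n : ℕ, 0 < mq n := by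
    intro n
    have h2 : (0:ℝ) < (n : ℝ) + 2 := by positivity
    have : 1 / ((n : ℝ) + 2) < 1 := by
      rw [div_lt_one h2]; have := Nat.cast_nonneg (α := ℝ) n; linarith
    simp only [hmq]; linarith
  have hmq1 : ∀ n : ℕ, mq n < 1 := by
    intro n
    have h2 : (0:ℝ) < (n : ℝ) + 2 := by positivity
    have : 0 < 1 / ((n : ℝ) + 2) := by positivity
    simp only [hmq]; linarith
  have hAmeas : ∀ n : ℕ, MeasurableSet {ω | mq n ≤ R.nrm y ω} := fun n =>
    measurableSet_le measurable_const (R.nrm_meas y)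
  have hApos : ∀ n, 0 < μ {ω | mq n ≤ R.nrm y ω} := fun n => hpos _ (hmq0 n) (hmq1 n)
  choose D hDm hDsub hDpos hDle using fun n => exists_small_aux hna (hAmeas n) (hApos n) n
  have hDle' : ∀ n, μ (D n) ≤ 2⁻¹ ^ n := by
    intro n
    refine (hDle n).trans ?_
    calc μ _ * 2⁻¹ ^ n ≤ 1 * 2⁻¹ ^ n := mul_le_mul_left prob_le_one _
    _ = 2⁻¹ ^ n := one_mul _
  set f : ℕ → Ω → ℝ := fun n ω => if ω ∈ D n then ((1:ℝ)/2) ^ n else 1 with hf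
  set ε : Ω → ℝ := fun ω => ⨅ n, f n ω with hεdef
  have hfmeas : ∀ n, Measurable (f n) := fun n =>
    Measurable.ite (hDm n) measurable_const measurable_const
  have hfpos : ∀ n ω, 0 < f n ω := by
    intro n ω
    simp only [hf]
    split <;> positivity
  have hbdd : ∀ ω, BddBelow (Set.range fun n => f n ω) := by
    intro ω
    refine ⟨0, ?_⟩
    rintro x ⟨n, rfl⟩
    exact (hfpos n ω).le
  have hεle : ∀ n ω, ω ∈ D n → ε ω ≤ ((1:ℝ)/2) ^ n := by
    intro n ω hω
    refine (ciInf_le (hbdd ω) n).trans_eq ?_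
    simp only [hf, if_pos hω]
  have hεlb : ∀ (N : ℕ) (ω : Ω), (∀ n, N ≤ n → ω ∉ D n) → ((1:ℝ)/2) ^ N ≤ ε ω := by
    intro N ω hω
    refine le_ciInf fun n => ?_
    simp only [hf]
    split
    · rename_i hmem
      have hn : n < N := by
        by_contra hc
        exact hω n (le_of_not_gt hc) hmem
      exact pow_le_pow_of_le_one (by norm_num) (by norm_num) hn.le
    · exact pow_le_one₀ (by norm_num) (by norm_num)
  have hlimsup : μ (Filter.limsup D Filter.atTop) = 0 := by
    refine measure_limsup_atTop_eq_zero ?_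
    refine ne_top_of_le_ne_top ?_ (ENNReal.tsum_le_tsum hDle')
    rw [ENNReal.tsum_geometric, ENNReal.one_sub_inv_two]
    simp
  have hεpos : ∀ᵐ ω ∂μ, 0 < ε ω := by
    rw [ae_iff]
    refine measure_mono_null ?_ hlimsup
    intro ω hω
    rw [Set.mem_setOf_eq, not_lt] at hω
    rw [Filter.mem_limsup_iff_frequently_mem]
    by_contra hn
    rw [Filter.not_frequently] at hn
    obtain ⟨N, hN⟩ := Filter.eventually_atTop.1 hn
    have := (hεlb N ω hN).trans hω
    have hp : (0:ℝ) < ((1:ℝ)/2) ^ N := by positivity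
    linarith
  refine ⟨ε, Measurable.iInf hfmeas, hεpos, ?_⟩
  intro z hz hmem
  obtain ⟨m, hm0, hm1, hlt⟩ := hmem
  -- scalar facts: R.smul (-1) z = -z
  have h0smul : R.smul 0 z = 0 := by
    have h := R.add_smul 0 0 z
    rw [add_zero] at h
    exact (left_eq_add.1 h)
  have hnegz : R.smul (fun _ => (-1 : 𝕜)) z = -z := by
    have h := R.add_smul 1 (fun _ => (-1 : 𝕜)) z
    have h1 : (1 + fun _ => (-1 : 𝕜) : Ω → 𝕜) = 0 := by
      funext ω; simp
    rw [h1, h0smul, R.one_smul] at h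
    exact (neg_eq_of_add_eq_zero_right h.symm).symm
  have hnrm_neg : R.nrm (-z) =ᵐ[μ] R.nrm z := by
    have h := R.nrm_smul (fun _ => (-1 : 𝕜)) z measurable_const
    rw [hnegz] at h
    refine h.trans ?_
    filter_upwards with ω
    simp
  have htri := R.nrm_add (y + z) (-z)
  have hyz : y + z + -z = y := by abel
  rw [hyz] at htri
  -- choose n
  have hδ : (0:ℝ) < (1 - m) / 2 := by linarith
  obtain ⟨n₁, hn₁⟩ := exists_pow_lt_of_lt_one hδ (by norm_num : (1:ℝ)/2 < 1)
  obtain ⟨k, hk⟩ := exists_nat_gt (1 / ((1 - m) / 2))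
  set n := max n₁ k with hn
  have hpow : ((1:ℝ)/2) ^ n < (1 - m) / 2 :=
    lt_of_le_of_lt (pow_le_pow_of_le_one (by norm_num) (by norm_num) (le_max_left _ _)) hn₁
  have hfrac : 1 / ((n : ℝ) + 2) < (1 - m) / 2 := by
    have hk2 : 1 / ((1 - m) / 2) < (n : ℝ) + 2 := by
      have : (k : ℝ) ≤ (n : ℝ) := Nat.cast_le.2 (le_max_right _ _)
      linarith
    rw [div_lt_iff₀ (by positivity)]
    rw [div_lt_iff₀ hδ] at hk2
    nlinarith
  -- find a good point in D n
  have hae : ∀ᵐ ω ∂μ, R.nrm y ω ≤ R.nrm (y + z) ω + R.nrm (-z) ω ∧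
      R.nrm (-z) ω = R.nrm z ω ∧ R.nrm (y + z) ω < m ∧ R.nrm z ω ≤ ε ω := by
    filter_upwards [htri, hnrm_neg, hlt, hz] with ω h1 h2 h3 h4
    exact ⟨h1, h2, h3, h4⟩
  rw [ae_iff] at hae
  set T : Set Ω := {a | ¬ (R.nrm y a ≤ R.nrm (y + z) a + R.nrm (-z) a ∧
      R.nrm (-z) a = R.nrm z a ∧ R.nrm (y + z) a < m ∧ R.nrm z a ≤ ε a)} with hT
  have hDT : 0 < μ (D n \ T) := by
    have hle : μ (D n) ≤ μ (D n \ T) + μ T := by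
      refine (measure_mono ?_).trans (measure_union_le _ _)
      intro ω hω
      by_cases h : ω ∈ T
      · exact Or.inr h
      · exact Or.inl ⟨hω, h⟩
    rw [hae, add_zero] at hle
    exact lt_of_lt_of_le (hDpos n) hle
  obtain ⟨ω, hωD, hωT⟩ := nonempty_of_measure_ne_zero hDT.ne'
  rw [hT, Set.mem_setOf_eq, not_not] at hωT
  obtain ⟨h1, h2, h3, h4⟩ := hωT
  have hy' : mq n ≤ R.nrm y ω := hDsub n hωD
  have hεn : ε ω ≤ ((1:ℝ)/2) ^ n := hεle n ω hωD
  have : R.nrm y ω < m + (1 - m) / 2 := by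
    calc R.nrm y ω ≤ R.nrm (y + z) ω + R.nrm (-z) ω := h1
    _ = R.nrm (y + z) ω + R.nrm z ω := by rw [h2]
    _ < m + ε ω := by linarith
    _ ≤ m + ((1:ℝ)/2) ^ n := by linarith
    _ < m + (1 - m) / 2 := by linarith
  have hmqn : m + (1 - m) / 2 ≤ mq n := by
    simp only [hmq]
    linarith
  exact lt_irrefl _ (this.trans_le (hmqn.trans hy'))
end

section
/- Let (E, ‖·‖) be a random normed module over K with base a nonatomic probability space (Ω, F, P). Then E endowed with its locally L⁰-convex topology T_c is a Hausdorff totally disconnected topological space. -/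
open MeasureTheory

variable {Ω : Type*} [MeasurableSpace Ω] {μ : Measure Ω} {𝕜 : Type*} [RCLike 𝕜]
  {E : Type*} [AddCommGroup E]

/-- A set `G ⊆ E` is open for the locally `L⁰`-convex topology `T_c`. -/
def TcOpen (μ : Measure Ω) (R : RandomNormedModule Ω μ 𝕜 E) (G : Set E) : Prop :=
  ∀ x ∈ G, ∃ ε : Ω → ℝ, Measurable ε ∧ (∀ᵐ ω ∂μ, 0 < ε ω) ∧
    ∀ z : E, (∀ᵐ ω ∂μ, R.nrm z ω ≤ ε ω) → x + z ∈ G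

private lemma rnm_smul_zero (R : RandomNormedModule Ω μ 𝕜 E) (x : E) : R.smul 0 x = 0 := by
  have h := R.add_smul 0 0 x
  rw [add_zero] at h
  exact (left_eq_add.mp h)

private lemma rnm_smul_neg_one (R : RandomNormedModule Ω μ 𝕜 E) (x : E) :
    R.smul (-1) x = -x := by
  have h := R.add_smul 1 (-1) x
  rw [add_neg_cancel, rnm_smul_zero, R.one_smul] at h
  exact (neg_eq_of_add_eq_zero_right h.symm).symm

private lemma rnm_nrm_zero (R : RandomNormedModule Ω μ 𝕜 E) :
    R.nrm (0 : E) =ᵐ[μ] fun _ => (0 : ℝ) := by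
  have h := R.nrm_smul 0 0 measurable_const
  rw [rnm_smul_zero] at h
  filter_upwards [h] with ω hω
  simpa using hω

private lemma rnm_nrm_neg (R : RandomNormedModule Ω μ 𝕜 E) (x : E) :
    R.nrm (-x) =ᵐ[μ] R.nrm x := by
  have h := R.nrm_smul (-1) x (by
    have : (-1 : Ω → 𝕜) = fun _ => (-1 : 𝕜) := rfl
    rw [this]; exact measurable_const)
  rw [rnm_smul_neg_one] at h
  filter_upwards [h] with ω hω
  simpa using hω

private lemma rnm_nrm_lower (R : RandomNormedModule Ω μ 𝕜 E) (a b : E) :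
    ∀ᵐ ω ∂μ, R.nrm a ω - R.nrm b ω ≤ R.nrm (a + b) ω := by
  have h1 := R.nrm_add (a + b) (-b)
  have h2 := rnm_nrm_neg R b
  rw [add_neg_cancel_right] at h1
  filter_upwards [h1, h2] with ω h1 h2
  rw [h2] at h1
  linarith

private lemma exists_disjoint_seq
    (hna : ∀ A : Set Ω, ¬ IsPAtom μ A) (S : Set Ω) (hS : MeasurableSet S) (h0 : 0 < μ S) :
    ∃ D : ℕ → Set Ω, (∀ n, MeasurableSet (D n)) ∧ (∀ n, D n ⊆ S) ∧
      (∀ n, 0 < μ (D n)) ∧ ∀ i j, i ≠ j → D i ∩ D j = ∅ := by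
  classical
  have split : ∀ A : Set Ω, MeasurableSet A → 0 < μ A →
      ∃ B : Set Ω, MeasurableSet B ∧ B ⊆ A ∧ 0 < μ B ∧ 0 < μ (A \ B) := by
    intro A hA h0A
    have h := hna A
    rw [IsPAtom] at h
    push_neg at h
    obtain ⟨B, hBm, hBs, h1, h2⟩ := h hA h0A
    exact ⟨B, hBm, hBs, pos_iff_ne_zero.mpr h1, pos_iff_ne_zero.mpr h2⟩
  choose B hBm hBsub hB0 hd0 using split
  let f : {A : Set Ω // MeasurableSet A ∧ 0 < μ A} → {A : Set Ω // MeasurableSet A ∧ 0 < μ A} :=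
    fun p => ⟨p.1 \ B p.1 p.2.1 p.2.2, p.2.1.diff (hBm _ _ _), hd0 _ _ _⟩
  let T : ℕ → {A : Set Ω // MeasurableSet A ∧ 0 < μ A} := fun n => f^[n] ⟨S, hS, h0⟩
  have hTsucc : ∀ n, T (n+1) = f (T n) := fun n => Function.iterate_succ_apply' f n _
  have hTsub : ∀ n, (T (n+1)).1 ⊆ (T n).1 := by
    intro n; rw [hTsucc]; exact Set.diff_subset
  have hTmono : ∀ n m, n ≤ m → (T m).1 ⊆ (T n).1 := by
    intro n m h
    induction m, h using Nat.le_induction with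
    | base => exact subset_rfl
    | succ m hm ih => exact (hTsub m).trans ih
  have hT0 : (T 0).1 = S := rfl
  refine ⟨fun n => B (T n).1 (T n).2.1 (T n).2.2, fun n => hBm _ _ _, ?_, fun n => hB0 _ _ _, ?_⟩
  · intro n
    exact (hBsub _ _ _).trans (by rw [← hT0]; exact hTmono 0 n (Nat.zero_le n))
  · have key : ∀ i j, i < j →
        B (T i).1 (T i).2.1 (T i).2.2 ∩ B (T j).1 (T j).2.1 (T j).2.2 = ∅ := by
      intro i j hij
      have h1 : B (T j).1 (T j).2.1 (T j).2.2 ⊆ (T (i+1)).1 :=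
        (hBsub _ _ _).trans (hTmono (i+1) j hij)
      have h2 : (T (i+1)).1 = (T i).1 \ B (T i).1 (T i).2.1 (T i).2.2 := by rw [hTsucc]
      rw [Set.eq_empty_iff_forall_notMem]
      rintro ω ⟨hωi, hωj⟩
      have := h1 hωj; rw [h2] at this; exact this.2 hωi
    intro i j hij
    rcases hij.lt_or_gt with h | h
    · exact key i j h
    · rw [Set.inter_comm]; exact key j i h

private lemma compl_ball_open
    (hna : ∀ A : Set Ω, ¬ IsPAtom μ A) (R : RandomNormedModule Ω μ 𝕜 E)
    (ε : Ω → ℝ) (hεm : Measurable ε) (hεp : ∀ᵐ ω ∂μ, 0 < ε ω) (w : E)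
    (hw : ¬ ∃ m : ℝ, 0 < m ∧ m < 1 ∧ ∀ᵐ ω ∂μ, R.nrm w ω < m * ε ω) :
    ∃ ε' : Ω → ℝ, Measurable ε' ∧ (∀ᵐ ω ∂μ, 0 < ε' ω) ∧
      ∀ z : E, (∀ᵐ ω ∂μ, R.nrm z ω ≤ ε' ω) →
        ¬ ∃ m : ℝ, 0 < m ∧ m < 1 ∧ ∀ᵐ ω ∂μ, R.nrm (w + z) ω < m * ε ω := by
  classical
  push_neg at hw
  have hAm : MeasurableSet {ω | ε ω ≤ R.nrm w ω ∧ 0 < ε ω} :=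
    (measurableSet_le hεm (R.nrm_meas w)).inter (measurableSet_lt measurable_const hεm)
  rcases (zero_le : 0 ≤ μ {ω | ε ω ≤ R.nrm w ω ∧ 0 < ε ω}).eq_or_lt with hA0 | hA0
  · -- null case: use ε' = (ε - ‖w‖)/2 where ‖w‖ < ε
    refine ⟨fun ω => if R.nrm w ω < ε ω then (ε ω - R.nrm w ω)/2 else 1, ?_, ?_, ?_⟩
    · exact Measurable.ite (measurableSet_lt (R.nrm_meas w) hεm)
        ((hεm.sub (R.nrm_meas w)).div_const 2) measurable_const
    · apply ae_of_all
      intro ω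
      dsimp only
      split_ifs with h
      · linarith
      · norm_num
    · intro z hz hex
      obtain ⟨m, hm0, hm1, hmae⟩ := hex
      have hnA : ∀ᵐ ω ∂μ, ω ∉ {ω | ε ω ≤ R.nrm w ω ∧ 0 < ε ω} :=
        measure_eq_zero_iff_ae_notMem.mp hA0.symm
      have hf : ∀ᵐ ω ∂μ, R.nrm w ω < (1 + m)/2 * ε ω := by
        filter_upwards [hz, hmae, hεp, hnA, rnm_nrm_lower R w z] with ω h1 h2 h3 h4 h5
        have hlt : R.nrm w ω < ε ω := by
          by_contra hc
          exact h4 ⟨le_of_not_gt hc, h3⟩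
        rw [if_pos hlt] at h1
        nlinarith [mul_pos (show (0:ℝ) < 1 - m by linarith) h3]
      exact hw ((1 + m)/2) (by linarith) (by linarith) (hf.mono fun ω h => not_le.mpr h)
  · -- positive case: use nonatomicity
    obtain ⟨D, hDm, hDs, hD0, hDdisj⟩ := exists_disjoint_seq hna _ hAm hA0
    have hval : ∀ k : ℕ, ((2:ENNReal)⁻¹ ^ (k+1)).toReal = (2:ℝ)⁻¹ ^ (k+1) := by
      intro k
      rw [ENNReal.toReal_pow, ENNReal.toReal_inv]
      norm_num
    have hφm : Measurable (fun ω => ∑' n, (D n).indicator (fun _ => (2:ENNReal)⁻¹ ^ (n+1)) ω) :=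
      Measurable.ennreal_tsum fun n => measurable_const.indicator (hDm n)
    have hφD : ∀ k, ∀ ω ∈ D k,
        (∑' n, (D n).indicator (fun _ => (2:ENNReal)⁻¹ ^ (n+1)) ω) = (2:ENNReal)⁻¹ ^ (k+1) := by
      intro k ω hω
      rw [tsum_eq_single k]
      · exact Set.indicator_of_mem hω _
      · intro n hn
        apply Set.indicator_of_notMem
        intro hmem
        exact Set.eq_empty_iff_forall_notMem.mp (hDdisj n k hn) ω ⟨hmem, hω⟩
    set g : Ω → ℝ := fun ω => if ω ∈ ⋃ n, D n then
        (∑' n, (D n).indicator (fun _ => (2:ENNReal)⁻¹ ^ (n+1)) ω).toReal else 1 with hgdef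
    have hgm : Measurable g :=
      Measurable.ite (MeasurableSet.iUnion hDm) hφm.ennreal_toReal measurable_const
    have hgD : ∀ k, ∀ ω ∈ D k, g ω = (2:ℝ)⁻¹ ^ (k+1) := by
      intro k ω hω
      rw [hgdef]
      dsimp only
      rw [if_pos (Set.mem_iUnion.mpr ⟨k, hω⟩), hφD k ω hω, hval]
    have hgpos : ∀ ω, 0 < g ω := by
      intro ω
      by_cases h : ω ∈ ⋃ n, D n
      · obtain ⟨k, hk⟩ := Set.mem_iUnion.mp h
        rw [hgD k ω hk]
        positivity
      · rw [hgdef]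
        dsimp only
        rw [if_neg h]
        norm_num
    refine ⟨fun ω => ε ω * g ω, hεm.mul hgm, ?_, ?_⟩
    · filter_upwards [hεp] with ω h
      exact mul_pos h (hgpos ω)
    · intro z hz hex
      obtain ⟨m, hm0, hm1, hmae⟩ := hex
      obtain ⟨k, hk⟩ := exists_pow_lt_of_lt_one (show (0:ℝ) < 1 - m by linarith)
        (show (2:ℝ)⁻¹ < 1 by norm_num)
      have hae2 : ∀ᵐ ω ∂μ, ω ∉ D k := by
        filter_upwards [hz, hmae, rnm_nrm_lower R w z] with ω h1 h2 h3
        intro hωk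
        have hA' : ω ∈ {ω | ε ω ≤ R.nrm w ω ∧ 0 < ε ω} := hDs k hωk
        obtain ⟨hεle, hε0⟩ := hA'
        rw [hgD k ω hωk] at h1
        have hpow : (2:ℝ)⁻¹ ^ (k+1) ≤ (2:ℝ)⁻¹ ^ k :=
          pow_le_pow_of_le_one (by norm_num) (by norm_num) (Nat.le_succ k)
        nlinarith [mul_lt_mul_of_pos_left hk hε0,
          mul_le_mul_of_nonneg_left hpow (le_of_lt hε0)]
      exact absurd (measure_eq_zero_iff_ae_notMem.mpr hae2) (hD0 k).ne'

/-- A random normed module over a nonatomic probability base, endowed with the locally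
`L⁰`-convex topology, is Hausdorff and totally disconnected (every point has a clopen
neighborhood inside every `T_c`-open neighborhood). -/
theorem rnm_Tc_hausdorff_totally_disconnected [IsProbabilityMeasure μ]
    (hna : ∀ A : Set Ω, ¬ IsPAtom μ A)
    (R : RandomNormedModule Ω μ 𝕜 E) :
    (∀ x y : E, x ≠ y → ∃ U V : Set E, TcOpen μ R U ∧ TcOpen μ R V ∧
      x ∈ U ∧ y ∈ V ∧ U ∩ V = ∅) ∧
    (∀ (x : E) (U : Set E), TcOpen μ R U → x ∈ U →
      ∃ V : Set E, TcOpen μ R V ∧ TcOpen μ R Vᶜ ∧ x ∈ V ∧ V ⊆ U) := by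
  constructor
  · -- Hausdorff
    intro x y hxy
    set d : Ω → ℝ := R.nrm (x - y) with hd_def
    have hd : Measurable d := R.nrm_meas (x - y)
    have hopen : ∀ c : E, TcOpen μ R {z : E | ∀ᵐ ω ∂μ, 0 < d ω → R.nrm (z - c) ω < d ω / 2} := by
      intro c u hu
      refine ⟨fun ω => if 0 < d ω ∧ R.nrm (u - c) ω < d ω / 2 then
          (d ω / 2 - R.nrm (u - c) ω)/2 else 1, ?_, ?_, ?_⟩
      · exact Measurable.ite
          ((measurableSet_lt measurable_const hd).inter
            (measurableSet_lt (R.nrm_meas (u - c)) (hd.div_const 2)))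
          (((hd.div_const 2).sub (R.nrm_meas (u - c))).div_const 2) measurable_const
      · apply ae_of_all
        intro ω
        dsimp only
        split_ifs with h
        · linarith [h.2]
        · norm_num
      · intro z hz
        have hu' : u ∈ {z : E | ∀ᵐ ω ∂μ, 0 < d ω → R.nrm (z - c) ω < d ω / 2} := hu
        show ∀ᵐ ω ∂μ, 0 < d ω → R.nrm (u + z - c) ω < d ω / 2
        filter_upwards [hu', hz, R.nrm_add (u - c) z] with ω h1 h2 h3
        intro hdω
        have h1' := h1 hdω
        rw [if_pos ⟨hdω, h1'⟩] at h2
        rw [add_sub_right_comm]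
        linarith
    refine ⟨{z : E | ∀ᵐ ω ∂μ, 0 < d ω → R.nrm (z - x) ω < d ω / 2},
      {z : E | ∀ᵐ ω ∂μ, 0 < d ω → R.nrm (z - y) ω < d ω / 2}, hopen x, hopen y, ?_, ?_, ?_⟩
    · show ∀ᵐ ω ∂μ, 0 < d ω → R.nrm (x - x) ω < d ω / 2
      rw [sub_self]
      filter_upwards [rnm_nrm_zero R] with ω h
      intro hdω
      rw [h]
      linarith
    · show ∀ᵐ ω ∂μ, 0 < d ω → R.nrm (y - y) ω < d ω / 2
      rw [sub_self]
      filter_upwards [rnm_nrm_zero R] with ω h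
      intro hdω
      rw [h]
      linarith
    · rw [Set.eq_empty_iff_forall_notMem]
      rintro z ⟨h1, h2⟩
      apply hxy
      have hxz : R.nrm (x - z) =ᵐ[μ] R.nrm (z - x) := by
        have := rnm_nrm_neg R (z - x)
        rwa [neg_sub] at this
      have htri := R.nrm_add (x - z) (z - y)
      rw [sub_add_sub_cancel] at htri
      have hdz : d =ᵐ[μ] fun _ => (0 : ℝ) := by
        filter_upwards [h1, h2, R.nrm_nonneg (x - y), htri, hxz] with ω k1 k2 k3 k4 k5
        by_contra hne
        have : 0 < d ω := lt_of_le_of_ne k3 (Ne.symm hne)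
        have l1 := k1 this
        have l2 := k2 this
        rw [k5] at k4
        have : d ω < d ω := by
          calc d ω ≤ R.nrm (z - x) ω + R.nrm (z - y) ω := k4
          _ < d ω / 2 + d ω / 2 := by linarith
          _ = d ω := by ring
        exact absurd this (lt_irrefl _)
      have := R.nrm_def (x - y) hdz
      exact sub_eq_zero.mp this
  · -- totally disconnected
    intro x U hU hx
    obtain ⟨ε, hεm, hεp, hball⟩ := hU x hx
    set V : Set E :=
      {z : E | ∃ m : ℝ, 0 < m ∧ m < 1 ∧ ∀ᵐ ω ∂μ, R.nrm (z - x) ω < m * ε ω} with hVdef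
    refine ⟨V, ?_, ?_, ?_, ?_⟩
    · -- V open
      rintro u ⟨m, hm0, hm1, hae⟩
      refine ⟨fun ω => (1 - m)/2 * ε ω, hεm.const_mul _, ?_, ?_⟩
      · filter_upwards [hεp] with ω h
        exact mul_pos (by linarith) h
      · intro z hz
        refine ⟨(1 + m)/2, by linarith, by linarith, ?_⟩
        filter_upwards [hae, hz, R.nrm_add (u - x) z] with ω h1 h2 h3
        rw [add_sub_right_comm]
        linarith
    · -- Vᶜ open
      intro u hu
      have hu' : ¬ ∃ m : ℝ, 0 < m ∧ m < 1 ∧ ∀ᵐ ω ∂μ, R.nrm (u - x) ω < m * ε ω := hu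
      obtain ⟨ε', h1, h2, h3⟩ := compl_ball_open hna R ε hεm hεp (u - x) hu'
      refine ⟨ε', h1, h2, ?_⟩
      intro z hz hmem
      obtain ⟨m, ha, hb, hc⟩ := hmem
      rw [add_sub_right_comm] at hc
      exact h3 z hz ⟨m, ha, hb, hc⟩
    · -- x ∈ V
      refine ⟨1/2, by norm_num, by norm_num, ?_⟩
      rw [sub_self]
      filter_upwards [rnm_nrm_zero R, hεp] with ω h hp
      rw [h]
      linarith
    · -- V ⊆ U
      rintro z ⟨m, hm0, hm1, hae⟩
      have h := hball (z - x) (by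
        filter_upwards [hae, hεp] with ω h1 h2
        nlinarith)
      rwa [show x + (z - x) = z by abel] at h
end

section
/- Let (E, P) be a random locally convex module over K with base a nonatomic probability space (Ω, F, P), and let f : E → L⁰(F, K) be a module homomorphism that is continuous from the (ε, λ)-topology on E to the locally L⁰-convex topology on L⁰(F, K). Then f(x) = 0 for all x ∈ E. -/
open MeasureTheory

/-- A random locally convex module over `𝕜` with base `(Ω, F, μ)`: a module over `L⁰(F, 𝕜)`
(scalars represented by `𝕜`-valued functions, a.e. equal scalars acting equally) together with
a separating family `sn` of `L⁰`-seminorms (represented by measurable real functions, all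
relations holding almost everywhere). -/
structure RandomLCModule (Ω : Type*) [MeasurableSpace Ω] (μ : Measure Ω)
    (𝕜 : Type*) [RCLike 𝕜] (E : Type*) [AddCommGroup E] where
  smul : (Ω → 𝕜) → E → E
  smul_congr : ∀ (ξ η : Ω → 𝕜) (x : E), ξ =ᵐ[μ] η → smul ξ x = smul η x
  one_smul : ∀ x : E, smul 1 x = x
  mul_smul : ∀ (ξ η : Ω → 𝕜) (x : E), smul (ξ * η) x = smul ξ (smul η x)
  smul_add : ∀ (ξ : Ω → 𝕜) (x y : E), smul ξ (x + y) = smul ξ x + smul ξ y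
  add_smul : ∀ (ξ η : Ω → 𝕜) (x : E), smul (ξ + η) x = smul ξ x + smul η x
  sn : Set (E → Ω → ℝ)
  sn_meas : ∀ p ∈ sn, ∀ x : E, Measurable (p x)
  sn_nonneg : ∀ p ∈ sn, ∀ x : E, ∀ᵐ ω ∂μ, 0 ≤ p x ω
  sn_add : ∀ p ∈ sn, ∀ x y : E, ∀ᵐ ω ∂μ, p (x + y) ω ≤ p x ω + p y ω
  sn_smul : ∀ p ∈ sn, ∀ (ξ : Ω → 𝕜) (x : E), Measurable ξ →
      p (smul ξ x) =ᵐ[μ] fun ω => ‖ξ ω‖ * p x ω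
  sn_sep : ∀ x : E, (∀ p ∈ sn, p x =ᵐ[μ] (fun _ => 0)) → x = 0

variable {Ω : Type*} [MeasurableSpace Ω] {μ : Measure Ω} {𝕜 : Type*} [RCLike 𝕜]
  {E : Type*} [AddCommGroup E]

/-- `f : E → L⁰(F, 𝕜)` is a module homomorphism. -/
def IsModuleHom (μ : Measure Ω) (R : RandomLCModule Ω μ 𝕜 E) (f : E → Ω → 𝕜) : Prop :=
  (∀ x : E, Measurable (f x)) ∧ (∀ x y : E, f (x + y) =ᵐ[μ] f x + f y) ∧
    ∀ (ξ : Ω → 𝕜) (x : E), Measurable ξ → f (R.smul ξ x) =ᵐ[μ] ξ * f x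

/-- Continuity of `f` from `(E, T_{ε,λ})` to `(L⁰(F,𝕜), T_c)`, expressed at `0` via the
standard neighborhood bases. -/
def ContinuousELtoTc (μ : Measure Ω) (R : RandomLCModule Ω μ 𝕜 E) (f : E → Ω → 𝕜) : Prop :=
  ∀ ε : Ω → ℝ, Measurable ε → (∀ᵐ ω ∂μ, 0 < ε ω) →
    ∃ (Q : Finset (E → Ω → ℝ)) (hQ : Q.Nonempty) (δ lam : ℝ), ↑Q ⊆ R.sn ∧
      0 < δ ∧ 0 < lam ∧ lam < 1 ∧
      ∀ x : E, ENNReal.ofReal (1 - lam) < μ {ω | Q.sup' hQ (fun p => p x ω) < δ} →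
        ∀ᵐ ω ∂μ, ‖f x ω‖ ≤ ε ω


open scoped ENNReal in
private lemma half_lemma {Ω : Type*} [MeasurableSpace Ω] {μ : Measure Ω}
    (hna : ∀ A : Set Ω, ¬ IsPAtom μ A) {S : Set Ω} (hS : MeasurableSet S)
    (h0 : 0 < μ S) :
    ∃ B : Set Ω, B ⊆ S ∧ MeasurableSet B ∧ 0 < μ B ∧ 2 * μ B ≤ μ S := by
  have h := hna S
  rw [IsPAtom] at h
  push_neg at h
  obtain ⟨B, hBm, hBs, hB1, hB2⟩ := h hS h0
  have hsum : μ B + μ (S \ B) = μ S := by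
    have := measure_inter_add_diff (μ := μ) S hBm
    rwa [Set.inter_eq_self_of_subset_right hBs] at this
  rcases le_total (μ B) (μ (S \ B)) with hle | hle
  · refine ⟨B, hBs, hBm, pos_iff_ne_zero.mpr hB1, ?_⟩
    calc 2 * μ B = μ B + μ B := two_mul _
    _ ≤ μ B + μ (S \ B) := by gcongr
    _ = μ S := hsum
  · refine ⟨S \ B, Set.diff_subset, hS.diff hBm, pos_iff_ne_zero.mpr hB2, ?_⟩
    calc 2 * μ (S \ B) = μ (S \ B) + μ (S \ B) := two_mul _
    _ ≤ μ B + μ (S \ B) := by gcongr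
    _ = μ S := hsum

open scoped ENNReal in
private lemma pow_small_lemma {Ω : Type*} [MeasurableSpace Ω] {μ : Measure Ω}
    (hna : ∀ A : Set Ω, ¬ IsPAtom μ A) :
    ∀ (n : ℕ) {S : Set Ω}, MeasurableSet S → 0 < μ S →
      ∃ B : Set Ω, B ⊆ S ∧ MeasurableSet B ∧ 0 < μ B ∧ μ B ≤ 2⁻¹ ^ n * μ S := by
  intro n
  induction n with
  | zero => intro S hS h0; exact ⟨S, subset_rfl, hS, h0, by simp⟩
  | succ n ih =>
    intro S hS h0
    obtain ⟨B, hBs, hBm, hB0, hBle⟩ := ih hS h0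
    obtain ⟨C, hCs, hCm, hC0, hCle⟩ := half_lemma hna hBm hB0
    refine ⟨C, hCs.trans hBs, hCm, hC0, ?_⟩
    have h2 : μ C ≤ 2⁻¹ * μ B := by
      calc μ C = 2⁻¹ * (2 * μ C) := by
            rw [← mul_assoc, ENNReal.inv_mul_cancel (by norm_num) (by norm_num), one_mul]
      _ ≤ 2⁻¹ * μ B := by gcongr
    calc μ C ≤ 2⁻¹ * μ B := h2
    _ ≤ 2⁻¹ * ((2:ℝ≥0∞)⁻¹ ^ n * μ S) := by gcongr
    _ = 2⁻¹ ^ (n + 1) * μ S := by ring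

open scoped ENNReal in
private lemma exists_small_subset {Ω : Type*} [MeasurableSpace Ω] {μ : Measure Ω}
    [IsProbabilityMeasure μ]
    (hna : ∀ A : Set Ω, ¬ IsPAtom μ A) {S : Set Ω} (hS : MeasurableSet S)
    (h0 : 0 < μ S) {ε : ℝ≥0∞} (hε : ε ≠ 0) :
    ∃ B : Set Ω, B ⊆ S ∧ MeasurableSet B ∧ 0 < μ B ∧ μ B < ε := by
  obtain ⟨n, hn⟩ := ENNReal.exists_inv_two_pow_lt hε
  obtain ⟨B, h1, h2, h3, h4⟩ := pow_small_lemma hna n hS h0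
  refine ⟨B, h1, h2, h3, lt_of_le_of_lt ?_ hn⟩
  calc μ B ≤ 2⁻¹ ^ n * μ S := h4
  _ ≤ 2⁻¹ ^ n * 1 := by gcongr; exact prob_le_one
  _ = 2⁻¹ ^ n := mul_one _

/-- Theorem 1.2: over a nonatomic base, any module homomorphism `f : E → L⁰(F,𝕜)` which is
continuous from the `(ε,λ)`-topology on `E` to the locally `L⁰`-convex topology on
`L⁰(F,𝕜)` vanishes identically. -/
theorem min_conjugate_trivial_of_nonatomic [IsProbabilityMeasure μ]
    (hna : ∀ A : Set Ω, ¬ IsPAtom μ A)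
    (R : RandomLCModule Ω μ 𝕜 E) (f : E → Ω → 𝕜)
    (hf : IsModuleHom μ R f) (hcont : ContinuousELtoTc μ R f) :
    ∀ x : E, f x =ᵐ[μ] (fun _ => 0) := by
  intro x
  by_contra hne
  have hmeasfx := hf.1 x
  have hSne : μ {ω | f x ω ≠ 0} ≠ 0 := by
    intro h
    exact hne (by rwa [Filter.EventuallyEq, ae_iff])
  have hexists : ∃ n : ℕ, μ {ω | 1 / (n + 1 : ℝ) ≤ ‖f x ω‖} ≠ 0 := by
    by_contra hall
    push_neg at hall
    apply hSne
    have hsub : {ω | f x ω ≠ 0} ⊆ ⋃ n : ℕ, {ω | 1 / (n + 1 : ℝ) ≤ ‖f x ω‖} := by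
      intro ω hω
      have hpos : 0 < ‖f x ω‖ := norm_pos_iff.mpr hω
      obtain ⟨n, hn⟩ := exists_nat_one_div_lt hpos
      exact Set.mem_iUnion.mpr ⟨n, le_of_lt hn⟩
    exact measure_mono_null hsub (measure_iUnion_null hall)
  obtain ⟨n₀, hS0⟩ := hexists
  set η : ℝ := 1 / (n₀ + 1 : ℝ) with hηdef
  have hηpos : 0 < η := by positivity
  set S₀ : Set Ω := {ω | η ≤ ‖f x ω‖} with hS₀def
  obtain ⟨Q, hQ, δ, lam, hQsub, hδ, hlam0, hlam1, hmain⟩ :=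
    hcont (fun _ => η / 2) measurable_const
      (Filter.Eventually.of_forall fun _ => by positivity)
  have hS₀meas : MeasurableSet S₀ := measurableSet_le measurable_const hmeasfx.norm
  obtain ⟨A, hAsub, hAmeas, hApos, hAsmall⟩ :=
    exists_small_subset hna hS₀meas (pos_iff_ne_zero.mpr hS0)
      (ε := ENNReal.ofReal lam) (by simp [hlam0])
  set ξ : Ω → 𝕜 := A.indicator (fun _ => 1) with hξdef
  have hξmeas : Measurable ξ := measurable_const.indicator hAmeas
  set y := R.smul ξ x with hydef
  have hae : ∀ᵐ ω ∂μ, ∀ p ∈ (↑Q : Set (E → Ω → ℝ)), p y ω = ‖ξ ω‖ * p x ω :=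
    (ae_ball_iff Q.countable_toSet).mpr fun p hp => R.sn_smul p (hQsub hp) ξ x hξmeas
  have hN : μ {ω | ¬ ∀ p ∈ (↑Q : Set (E → Ω → ℝ)), p y ω = ‖ξ ω‖ * p x ω} = 0 := by
    rwa [ae_iff] at hae
  have hlt : ENNReal.ofReal (1 - lam) < μ {ω | Q.sup' hQ (fun p => p y ω) < δ} := by
    have hsub2 : Aᶜ \ {ω | ¬ ∀ p ∈ (↑Q : Set (E → Ω → ℝ)), p y ω = ‖ξ ω‖ * p x ω} ⊆
        {ω | Q.sup' hQ (fun p => p y ω) < δ} := by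
      rintro ω ⟨hωA, hωT⟩
      have hP : ∀ p ∈ (↑Q : Set (E → Ω → ℝ)), p y ω = ‖ξ ω‖ * p x ω := by
        simpa using hωT
      have hξ0 : ξ ω = 0 := Set.indicator_of_notMem hωA _
      rw [Set.mem_setOf_eq, Finset.sup'_lt_iff]
      intro p hp
      rw [hP p hp, hξ0, norm_zero, zero_mul]
      exact hδ
    have hchain : μ Aᶜ ≤ μ {ω | Q.sup' hQ (fun p => p y ω) < δ} := by
      calc μ Aᶜ = μ (Aᶜ \ {ω | ¬ ∀ p ∈ (↑Q : Set (E → Ω → ℝ)), p y ω = ‖ξ ω‖ * p x ω}) :=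
            (measure_diff_null hN).symm
      _ ≤ _ := measure_mono hsub2
    refine lt_of_lt_of_le ?_ hchain
    rw [prob_compl_eq_one_sub hAmeas]
    have h1 : ENNReal.ofReal (1 - lam) + μ A < 1 := by
      calc ENNReal.ofReal (1 - lam) + μ A
          < ENNReal.ofReal (1 - lam) + ENNReal.ofReal lam :=
            ENNReal.add_lt_add_left (by simp) hAsmall
      _ = ENNReal.ofReal 1 := by
            rw [← ENNReal.ofReal_add (by linarith) (le_of_lt hlam0)]; norm_num
      _ = 1 := ENNReal.ofReal_one
    exact lt_tsub_iff_right.mpr h1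
  have hbound := hmain y hlt
  have hsm := hf.2.2 ξ x hξmeas
  have hAnull : ∀ᵐ ω ∂μ, ω ∉ A := by
    filter_upwards [hbound, hsm] with ω h1 h2
    intro hωA
    have hξ1 : ξ ω = 1 := Set.indicator_of_mem hωA _
    have hfy : f y ω = f x ω := by
      rw [h2, Pi.mul_apply, hξ1, one_mul]
    rw [hfy] at h1
    have hη' : η ≤ ‖f x ω‖ := hAsub hωA
    linarith
  have hA0 : μ A = 0 := by
    rw [ae_iff] at hAnull
    simpa using hAnull
  exact absurd hA0 (pos_iff_ne_zero.mp hApos)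
end

section
/- Let (E, P) be a random locally convex module over K with base (Ω, F, P) and f : E → L⁰(F, K) a module homomorphism continuous from the locally L⁰-convex topology on E to the topology of convergence in probability on L⁰(F, K). Then there exist a countable measurable partition {A_i} of Ω, elements ξ_i ∈ L⁰₊, and finite subfamilies Q_i of P such that |f(x)| ≤ Σ_{i=1}^∞ Ĩ_{A_i}·ξ_i·‖x‖_{Q_i} for all x ∈ E; consequently f is also continuous from the (ε, λ)-topology on E to the topology of convergence in probability on L⁰(F, K). -/
open MeasureTheory

variable {Ω : Type*} [MeasurableSpace Ω] {μ : Measure Ω} {𝕜 : Type*} [RCLike 𝕜]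
  {E : Type*} [AddCommGroup E]

/-! ### Auxiliary machinery -/

/-- `𝕜`-valued indicator function of a set. -/
noncomputable def indK (𝕜 : Type*) [RCLike 𝕜] {Ω : Type*} (S : Set Ω) : Ω → 𝕜 :=
  S.indicator fun _ => 1

lemma indK_measurable {S : Set Ω} (hS : MeasurableSet S) :
    Measurable (indK 𝕜 S) := measurable_const.indicator hS

lemma norm_indK (S : Set Ω) (ω : Ω) :
    ‖indK 𝕜 S ω‖ = S.indicator (fun _ => (1 : ℝ)) ω := by
  by_cases h : ω ∈ S <;> simp [indK, Set.indicator_apply, h]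

lemma indK_mul_self (S : Set Ω) : indK 𝕜 S * indK 𝕜 S = indK 𝕜 S := by
  funext ω; by_cases h : ω ∈ S <;> simp [indK, Set.indicator_apply, h]

lemma indK_mul_disjoint {S T : Set Ω} (h : Disjoint S T) : indK 𝕜 S * indK 𝕜 T = 0 := by
  funext ω
  by_cases hS : ω ∈ S
  · have : ω ∉ T := fun hT => (Set.disjoint_left.mp h) hS hT
    simp [indK, Set.indicator_apply, hS, this]
  · simp [indK, Set.indicator_apply, hS]

lemma RandomLCModule.zero_smul (R : RandomLCModule Ω μ 𝕜 E) (x : E) : R.smul 0 x = 0 := by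
  have h := R.add_smul 0 0 x
  rw [add_zero] at h
  exact (left_eq_add.mp h)

/-- Combination of two elements along sets. -/
noncomputable def RandomLCModule.comb (R : RandomLCModule Ω μ 𝕜 E) (S T : Set Ω) (a b : E) : E :=
  R.smul (indK 𝕜 S) a + R.smul (indK 𝕜 (T \ S)) b

lemma RandomLCModule.smul_comb_left (R : RandomLCModule Ω μ 𝕜 E) (S T : Set Ω) (a b : E) :
    R.smul (indK 𝕜 S) (R.comb S T a b) = R.smul (indK 𝕜 S) a := by
  rw [RandomLCModule.comb, R.smul_add, ← R.mul_smul, ← R.mul_smul, indK_mul_self,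
    indK_mul_disjoint Set.disjoint_sdiff_right, R.zero_smul, add_zero]

lemma RandomLCModule.smul_comb_right (R : RandomLCModule Ω μ 𝕜 E) (S T : Set Ω) (a b : E) :
    R.smul (indK 𝕜 (T \ S)) (R.comb S T a b) = R.smul (indK 𝕜 (T \ S)) b := by
  rw [RandomLCModule.comb, R.smul_add, ← R.mul_smul, ← R.mul_smul, indK_mul_self,
    indK_mul_disjoint Set.disjoint_sdiff_left, R.zero_smul, zero_add]

/-- Measurability of the finite sup of seminorms. -/
lemma measurable_supSn (R : RandomLCModule Ω μ 𝕜 E) {Q : Finset (E → Ω → ℝ)}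
    (hQ : Q.Nonempty) (hQsn : ↑Q ⊆ R.sn) (x : E) :
    Measurable (fun ω => Q.sup' hQ (fun p => p x ω)) := by
  have : (fun ω => Q.sup' hQ (fun p => p x ω)) = Q.sup' hQ (fun p => p x) := by
    funext ω; rw [Finset.sup'_apply]
  rw [this]
  exact Finset.measurable_sup' hQ (fun p hp => R.sn_meas p (hQsn hp) x)

/-- Key localization lemma: from a single neighborhood given by continuity, produce an
exceptional set `H` of measure at most `lam` off which `f` is dominated by a multiple of
the finite sup of seminorms. -/
lemma key_localization [IsProbabilityMeasure μ]
    (R : RandomLCModule Ω μ 𝕜 E) (f : E → Ω → 𝕜) (hf : IsModuleHom μ R f)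
    {lam : ℝ} (hl0 : 0 < lam) (hl1 : lam < 1)
    (h1 : ∃ (Q : Finset (E → Ω → ℝ)) (hQ : Q.Nonempty), ↑Q ⊆ R.sn ∧
        ∃ ε : Ω → ℝ, Measurable ε ∧ (∀ᵐ ω ∂μ, 0 < ε ω) ∧
          ∀ x : E, (∀ᵐ ω ∂μ, Q.sup' hQ (fun p => p x ω) ≤ ε ω) →
            ENNReal.ofReal (1 - lam) < μ {ω | ‖f x ω‖ < 1}) :
    ∃ (Q : Finset (E → Ω → ℝ)) (hQ : Q.Nonempty) (ξ : Ω → ℝ) (H : Set Ω),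
      ↑Q ⊆ R.sn ∧ Measurable ξ ∧ (∀ᵐ ω ∂μ, 0 ≤ ξ ω) ∧ MeasurableSet H ∧
      μ H ≤ ENNReal.ofReal lam ∧
      ∀ x : E, ∀ᵐ ω ∂μ, ω ∉ H → ‖f x ω‖ ≤ ξ ω * Q.sup' hQ (fun p => p x ω) := by
  obtain ⟨Q, hQ, hQsn, ε, hεm, hεpos, himp⟩ := h1
  -- the sup of the seminorms and its truncation
  set g : E → Ω → ℝ := fun x ω => Q.sup' hQ (fun p => p x ω) with hg
  set m : E → Ω → ℝ := fun x ω => max (g x ω) 0 with hm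
  have hgmeas : ∀ x, Measurable (g x) := fun x => measurable_supSn R hQ hQsn x
  have hmmeas : ∀ x, Measurable (m x) := fun x => (hgmeas x).max measurable_const
  -- the "bad" set of x
  set D : E → Set Ω := fun x => {ω | m x ω < ε ω * ‖f x ω‖ ∧ 0 < ε ω} with hD
  have hDmeas : ∀ x, MeasurableSet (D x) := by
    intro x
    apply MeasurableSet.inter
    · exact measurableSet_lt (hmmeas x) (hεm.mul (hf.1 x).norm)
    · exact measurableSet_lt measurable_const hεm
  -- Step A : μ (D x) ≤ lam for every x
  have hDx : ∀ x : E, μ (D x) ≤ ENNReal.ofReal lam := by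
    intro x
    -- the decreasing family of "good" sets
    set T : ℕ → Set Ω := fun n =>
      {ω | ε ω * ‖f x ω‖ < m x ω + ε ω / (n + 1) ∧ 0 < ε ω} with hT
    have hTmeas : ∀ n, MeasurableSet (T n) := by
      intro n
      apply MeasurableSet.inter
      · exact measurableSet_lt (hεm.mul (hf.1 x).norm)
          ((hmmeas x).add (hεm.div measurable_const))
      · exact measurableSet_lt measurable_const hεm
    have hTanti : Antitone T := by
      intro n n' hnn' ω hω
      obtain ⟨h1, h2⟩ := hω
      refine ⟨lt_of_lt_of_le h1 ?_, h2⟩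
      have : ε ω / (n' + 1) ≤ ε ω / (n + 1) := by
        apply div_le_div_of_nonneg_left h2.le (by positivity)
        exact_mod_cast add_le_add_left (Nat.cast_le.mpr hnn') 1
      linarith
    -- each T n has measure ≥ 1 - lam
    have hTlb : ∀ n, ENNReal.ofReal (1 - lam) ≤ μ (T n) := by
      intro n
      set ζ : Ω → ℝ := fun ω => ε ω / (m x ω + ε ω / (n + 1)) with hζ
      have hζmeas : Measurable ζ :=
        hεm.div ((hmmeas x).add (hεm.div measurable_const))
      set ζK : Ω → 𝕜 := fun ω => (ζ ω : 𝕜) with hζK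
      have hζKmeas : Measurable ζK := RCLike.measurable_ofReal.comp hζmeas
      set y : E := R.smul ζK x with hy
      -- pointwise facts where ε > 0
      have hkey : ∀ ω, 0 < ε ω →
          (0 ≤ ζ ω ∧ ζ ω * m x ω ≤ ε ω ∧
            (∀ r : ℝ, (ζ ω * r < 1 ∧ 0 ≤ r) → ε ω * r < m x ω + ε ω / (n + 1))) := by
        intro ω hε
        have hmnn : 0 ≤ m x ω := le_max_right _ _
        have hc : 0 < ε ω / (n + 1) := by positivity
        have hden : 0 < m x ω + ε ω / (n + 1) := by linarith
        refine ⟨div_nonneg hε.le hden.le, ?_, ?_⟩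
        · rw [div_mul_eq_mul_div, div_le_iff₀ hden]
          have : ε ω * m x ω ≤ ε ω * (m x ω + ε ω / (n + 1)) :=
            mul_le_mul_of_nonneg_left (by linarith) hε.le
          linarith
        · rintro r ⟨hr1, hr0⟩
          have : ζ ω * r = ε ω * r / (m x ω + ε ω / (n + 1)) := by
            rw [hζ]; ring
          rw [this, div_lt_one hden] at hr1
          linarith
      -- ‖y‖_Q ≤ ε a.e.
      have hysup : ∀ᵐ ω ∂μ, Q.sup' hQ (fun p => p y ω) ≤ ε ω := by
        have hsm : ∀ᵐ ω ∂μ, ∀ p ∈ (Q : Set (E → Ω → ℝ)),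
            p y ω = ‖ζK ω‖ * p x ω := by
          rw [ae_ball_iff Q.countable_toSet]
          intro p hp
          exact R.sn_smul p (hQsn hp) ζK x hζKmeas
        filter_upwards [hsm, hεpos] with ω hω hε
        apply Finset.sup'_le
        intro p hp
        rw [hω p hp]
        obtain ⟨hζnn, hζm, -⟩ := hkey ω hε
        have hnorm : ‖ζK ω‖ = ζ ω := by
          rw [hζK]; simp only [RCLike.norm_ofReal]; exact abs_of_nonneg hζnn
        rw [hnorm]
        calc ζ ω * p x ω ≤ ζ ω * m x ω := by
              apply mul_le_mul_of_nonneg_left _ hζnn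
              exact le_trans (Finset.le_sup' (fun p => p x ω) hp) (le_max_left _ _)
          _ ≤ ε ω := hζm
      have h2 := himp y hysup
      -- {‖f y‖ < 1} ⊆ᵃᵉ T n
      have hsub : {ω | ‖f y ω‖ < 1} ≤ᵐ[μ] T n := by
        have hfy : f y =ᵐ[μ] ζK * f x := hf.2.2 ζK x hζKmeas
        filter_upwards [hfy, hεpos] with ω hfyω hε hmem
        have hnζ : ‖f y ω‖ = ζ ω * ‖f x ω‖ := by
          rw [hfyω]
          simp only [Pi.mul_apply, norm_mul, hζK, RCLike.norm_ofReal]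
          rw [abs_of_nonneg (hkey ω hε).1]
        obtain ⟨-, -, himpl⟩ := hkey ω hε
        have : ζ ω * ‖f x ω‖ < 1 := by rw [← hnζ]; exact hmem
        exact ⟨himpl ‖f x ω‖ ⟨this, norm_nonneg _⟩, hε⟩
      exact le_of_lt (lt_of_lt_of_le h2 (measure_mono_ae hsub))
    -- D x is contained in the complement of the intersection
    have hDsub : D x ⊆ (⋂ n, T n)ᶜ := by
      intro ω hω
      obtain ⟨h1, h2⟩ := hω
      simp only [Set.mem_compl_iff, Set.mem_iInter, not_forall]
      have : ∃ n : ℕ, ε ω / (n + 1) < ε ω * ‖f x ω‖ - m x ω := by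
        obtain ⟨n, hn⟩ := exists_nat_gt (ε ω / (ε ω * ‖f x ω‖ - m x ω))
        refine ⟨n, ?_⟩
        rw [div_lt_iff₀ (by positivity : (0:ℝ) < (n:ℝ) + 1)] at *
        have hpos : 0 < ε ω * ‖f x ω‖ - m x ω := by linarith
        rw [div_lt_iff₀ hpos] at hn
        nlinarith
      obtain ⟨n, hn⟩ := this
      exact ⟨n, fun hmem => absurd hmem.1 (by linarith)⟩
    have hInt : ENNReal.ofReal (1 - lam) ≤ μ (⋂ n, T n) := by
      have := MeasureTheory.tendsto_measure_iInter_atTop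
        (fun n => (hTmeas n).nullMeasurableSet) hTanti ⟨0, measure_ne_top μ _⟩
      exact ge_of_tendsto' this hTlb
    calc μ (D x) ≤ μ ((⋂ n, T n)ᶜ) := measure_mono hDsub
      _ = 1 - μ (⋂ n, T n) :=
          prob_compl_eq_one_sub (MeasurableSet.iInter hTmeas)
      _ ≤ ENNReal.ofReal lam := by
          rw [tsub_le_iff_right]
          calc (1 : ENNReal) = ENNReal.ofReal (lam + (1 - lam)) := by norm_num
            _ = ENNReal.ofReal lam + ENNReal.ofReal (1 - lam) :=
                ENNReal.ofReal_add hl0.le (by linarith)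
            _ ≤ ENNReal.ofReal lam + μ (⋂ n, T n) := by
                exact add_le_add_right hInt _
  -- Step B : pairwise a.e. inclusion into a combined element
  have hcomb : ∀ a b : E, (D a ∪ D b : Set Ω) ≤ᵐ[μ] D (R.comb (D a) (D b) a b) := by
    intro a b
    set c := R.comb (D a) (D b) a b with hc
    have hia : Measurable (indK 𝕜 (D a)) := indK_measurable (hDmeas a)
    have hib : Measurable (indK 𝕜 (D b \ D a)) :=
      indK_measurable ((hDmeas b).diff (hDmeas a))
    -- seminorm equalities on the corresponding pieces
    have hpa : ∀ᵐ ω ∂μ, ∀ p ∈ (Q : Set (E → Ω → ℝ)),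
        (ω ∈ D a → p c ω = p a ω) ∧ (ω ∈ D b \ D a → p c ω = p b ω) := by
      rw [ae_ball_iff Q.countable_toSet]
      intro p hp
      have e1 := R.sn_smul p (hQsn hp) (indK 𝕜 (D a)) c hia
      have e2 := R.sn_smul p (hQsn hp) (indK 𝕜 (D a)) a hia
      have e3 := R.sn_smul p (hQsn hp) (indK 𝕜 (D b \ D a)) c hib
      have e4 := R.sn_smul p (hQsn hp) (indK 𝕜 (D b \ D a)) b hib
      rw [hc, R.smul_comb_left, ← hc] at e1
      rw [hc, R.smul_comb_right, ← hc] at e3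
      filter_upwards [e1, e2, e3, e4] with ω h1 h2 h3 h4
      constructor
      · intro hω
        have hn : ‖indK 𝕜 (D a) ω‖ = 1 := by
          rw [norm_indK, Set.indicator_of_mem hω]
        have := h2.symm.trans h1
        rw [hn] at this
        simpa using this.symm
      · intro hω
        have hn : ‖indK 𝕜 (D b \ D a) ω‖ = 1 := by
          rw [norm_indK, Set.indicator_of_mem hω]
        have := h4.symm.trans h3
        rw [hn] at this
        simpa using this.symm
    -- values of f on the corresponding pieces
    have hfc : ∀ᵐ ω ∂μ,
        (ω ∈ D a → ‖f c ω‖ = ‖f a ω‖) ∧ (ω ∈ D b \ D a → ‖f c ω‖ = ‖f b ω‖) := by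
      have e1 := hf.2.1 (R.smul (indK 𝕜 (D a)) a) (R.smul (indK 𝕜 (D b \ D a)) b)
      have e2 := hf.2.2 (indK 𝕜 (D a)) a hia
      have e3 := hf.2.2 (indK 𝕜 (D b \ D a)) b hib
      filter_upwards [e1, e2, e3] with ω h1 h2 h3
      have hc' : f c ω = indK 𝕜 (D a) ω * f a ω + indK 𝕜 (D b \ D a) ω * f b ω := by
        have : f c ω = f (R.smul (indK 𝕜 (D a)) a) ω + f (R.smul (indK 𝕜 (D b \ D a)) b) ω := h1
        rw [this, h2, h3]; rfl
      constructor
      · intro hω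
        have h5 : ω ∉ D b \ D a := fun hmem => hmem.2 hω
        rw [hc', indK, indK, Set.indicator_of_mem hω, Set.indicator_of_notMem h5]
        simp
      · intro hω
        have h5 : ω ∉ D a := hω.2
        rw [hc', indK, indK, Set.indicator_of_mem hω, Set.indicator_of_notMem h5]
        simp
    filter_upwards [hpa, hfc] with ω h1 h2 hmem
    have hsplit : ω ∈ D a ∨ ω ∈ D b \ D a := by
      rcases hmem with h | h
      · exact Or.inl h
      · by_cases ha : ω ∈ D a
        · exact Or.inl ha
        · exact Or.inr ⟨h, ha⟩
    rcases hsplit with hω | hω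
    · have hma := hω.1
      have hεa := hω.2
      have hgc : g c ω = g a ω :=
        Finset.sup'_congr hQ rfl (fun p hp => (h1 p hp).1 hω)
      have hmc : m c ω = m a ω := by rw [hm]; simp only; rw [hgc]
      refine ⟨?_, hεa⟩
      rw [hmc, (h2.1 hω)]
      exact hma
    · have hmb := hω.1.1
      have hεb := hω.1.2
      have hgc : g c ω = g b ω :=
        Finset.sup'_congr hQ rfl (fun p hp => (h1 p hp).2 hω)
      have hmc : m c ω = m b ω := by rw [hm]; simp only; rw [hgc]
      refine ⟨?_, hεb⟩
      rw [hmc, (h2.2 hω)]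
      exact hmb
  -- Step C : construct H
  have hH : ∃ H : Set Ω, MeasurableSet H ∧ μ H ≤ ENNReal.ofReal lam ∧
      ∀ x : E, μ (D x \ H) = 0 := by
    set s := ⨆ z : E, μ (D z) with hs
    have hsle : s ≤ ENNReal.ofReal lam := iSup_le hDx
    have hstop : s ≠ ⊤ := (hsle.trans_lt ENNReal.ofReal_lt_top).ne
    by_cases hs0 : s = 0
    · refine ⟨∅, MeasurableSet.empty, by simp, ?_⟩
      intro x
      have h0 : μ (D x) = 0 :=
        le_antisymm (le_trans (le_iSup (fun z => μ (D z)) x) hs0.le) (zero_le)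
      simpa using h0
    · have hchoice : ∀ n : ℕ, ∃ z : E, s - (n : ENNReal)⁻¹ < μ (D z) := by
        intro n
        have hlt : s - (n : ENNReal)⁻¹ < s :=
          ENNReal.sub_lt_self hstop hs0 (by simp)
        rw [hs] at hlt
        exact lt_iSup_iff.mp hlt
      choose xs hxs using hchoice
      have hpart : ∀ n : ℕ, ∃ z : E,
          (⋃ k ∈ Finset.range (n+1), D (xs k)) ≤ᵐ[μ] D z := by
        intro n
        induction n with
        | zero =>
          refine ⟨xs 0, ?_⟩
          have he : (⋃ k ∈ Finset.range 1, D (xs k)) = D (xs 0) := by simp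
          rw [he]; exact Filter.EventuallyLE.refl _ _
        | succ n ih =>
          obtain ⟨z, hz⟩ := ih
          refine ⟨R.comb (D z) (D (xs (n+1))) z (xs (n+1)), ?_⟩
          have he : (⋃ k ∈ Finset.range (n+2), D (xs k)) =
              (⋃ k ∈ Finset.range (n+1), D (xs k)) ∪ D (xs (n+1)) := by
            rw [Finset.range_add_one]
            simp [Set.biUnion_insert, Set.union_comm]
          rw [he]
          exact (hz.union (Filter.EventuallyLE.refl _ _)).trans (hcomb z (xs (n+1)))
      choose zs hzs using hpart
      refine ⟨⋃ n, D (xs n), MeasurableSet.iUnion (fun n => hDmeas (xs n)), ?_, ?_⟩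
      · -- μ H ≤ lam
        have hmono : Monotone (fun n => ⋃ k ∈ Finset.range (n+1), D (xs k)) := by
          intro i j hij ω hω
          simp only [Set.mem_iUnion, Finset.mem_range] at *
          obtain ⟨k, hk, hmem⟩ := hω
          exact ⟨k, by omega, hmem⟩
        have hun : (⋃ n, ⋃ k ∈ Finset.range (n+1), D (xs k)) = ⋃ n, D (xs n) := by
          ext ω
          simp only [Set.mem_iUnion, Finset.mem_range]
          constructor
          · rintro ⟨n, k, -, hmem⟩; exact ⟨k, hmem⟩
          · rintro ⟨n, hmem⟩; exact ⟨n, n, by omega, hmem⟩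
        have ht := tendsto_measure_iUnion_atTop (μ := μ) hmono
        rw [hun] at ht
        refine le_trans (le_of_tendsto' ht ?_) hsle
        intro n
        exact le_trans (measure_mono_ae (hzs n)) (le_iSup (fun z => μ (D z)) (zs n))
      · intro x
        by_contra h0
        obtain ⟨n, hn⟩ := ENNReal.exists_inv_nat_lt h0
        have h1 : D x \ (⋃ n, D (xs n)) ⊆ (D x ∪ D (xs n)) \ D (xs n) := by
          intro ω hω
          exact ⟨Or.inl hω.1, fun hmem => hω.2 (Set.mem_iUnion.mpr ⟨n, hmem⟩)⟩
        have h2 : μ ((D x ∪ D (xs n)) \ D (xs n))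
            = μ (D x ∪ D (xs n)) - μ (D (xs n)) :=
          measure_diff Set.subset_union_right (hDmeas (xs n)).nullMeasurableSet
            (measure_ne_top μ _)
        have h3 : μ (D x ∪ D (xs n)) ≤ s :=
          le_trans (measure_mono_ae (hcomb x (xs n))) (le_iSup (fun z => μ (D z)) _)
        have h4 : μ (D x \ (⋃ n, D (xs n))) ≤ (n : ENNReal)⁻¹ := by
          calc μ (D x \ (⋃ n, D (xs n))) ≤ μ ((D x ∪ D (xs n)) \ D (xs n)) :=
                measure_mono h1
            _ = μ (D x ∪ D (xs n)) - μ (D (xs n)) := h2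
            _ ≤ s - (s - (n : ENNReal)⁻¹) := tsub_le_tsub h3 (hxs n).le
            _ ≤ (n : ENNReal)⁻¹ := by
                rw [tsub_le_iff_right, add_comm]
                exact le_tsub_add
        exact absurd h4 (not_le.mpr hn)
  obtain ⟨H, hHmeas, hHle, hHx⟩ := hH
  refine ⟨Q, hQ, fun ω => (ε ω)⁻¹, H, hQsn, hεm.inv, ?_, hHmeas, hHle, ?_⟩
  · filter_upwards [hεpos] with ω hω
    exact inv_nonneg.mpr hω.le
  · intro x
    obtain ⟨p₀, hp₀⟩ := hQ
    have h0 : ∀ᵐ ω ∂μ, ω ∉ D x \ H :=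
      measure_eq_zero_iff_ae_notMem.mp (hHx x)
    filter_upwards [h0, hεpos, R.sn_nonneg p₀ (hQsn hp₀) x] with ω hω hε hp0 hωH
    have hωD : ω ∉ D x := fun hmem => hω ⟨hmem, hωH⟩
    have hle : ε ω * ‖f x ω‖ ≤ m x ω := by
      by_contra hcon
      exact hωD ⟨lt_of_not_ge hcon, hε⟩
    have hgnn : 0 ≤ g x ω := le_trans hp0 (Finset.le_sup' (fun p => p x ω) hp₀)
    have hmg : m x ω = g x ω := max_eq_left hgnn
    rw [hmg] at hle
    calc ‖f x ω‖ = (ε ω)⁻¹ * (ε ω * ‖f x ω‖) := by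
          field_simp
      _ ≤ (ε ω)⁻¹ * g x ω := by
          exact mul_le_mul_of_nonneg_left hle (inv_nonneg.mpr hε.le)
/-- Any module homomorphism `f : E → L⁰(F,𝕜)` continuous from the locally `L⁰`-convex
topology on `E` to the topology of convergence in probability on `L⁰(F,𝕜)` admits a bound
`|f(x)| ≤ Σᵢ Ĩ_{Aᵢ}·ξᵢ·‖x‖_{Qᵢ}` over a countable measurable partition `{Aᵢ}` of `Ω`;
consequently `f` is also continuous from the `(ε,λ)`-topology on `E` to the topology of
convergence in probability. -/
theorem tc_continuous_module_hom_bound [IsProbabilityMeasure μ]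
    (R : RandomLCModule Ω μ 𝕜 E) (f : E → Ω → 𝕜) (hf : IsModuleHom μ R f)
    (hcont : ∀ δ lam : ℝ, 0 < δ → 0 < lam → lam < 1 →
      ∃ (Q : Finset (E → Ω → ℝ)) (hQ : Q.Nonempty), ↑Q ⊆ R.sn ∧
        ∃ ε : Ω → ℝ, Measurable ε ∧ (∀ᵐ ω ∂μ, 0 < ε ω) ∧
          ∀ x : E, (∀ᵐ ω ∂μ, Q.sup' hQ (fun p => p x ω) ≤ ε ω) →
            ENNReal.ofReal (1 - lam) < μ {ω | ‖f x ω‖ < δ}) :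
    (∃ A : ℕ → Set Ω, (∀ i, MeasurableSet (A i)) ∧ Pairwise (Function.onFun Disjoint A) ∧
      (⋃ i, A i) = Set.univ ∧
      ∃ ξ : ℕ → Ω → ℝ, (∀ i, Measurable (ξ i)) ∧ (∀ i, ∀ᵐ ω ∂μ, 0 ≤ ξ i ω) ∧
        ∃ (Q : ℕ → Finset (E → Ω → ℝ)) (hQ : ∀ i, (Q i).Nonempty),
          (∀ i, ↑(Q i) ⊆ R.sn) ∧
          ∀ x : E, ∀ᵐ ω ∂μ, ‖f x ω‖ ≤
            ∑' i, (A i).indicator (fun ω' => ξ i ω' * (Q i).sup' (hQ i) fun p => p x ω') ω) ∧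
    (∀ δ lam : ℝ, 0 < δ → 0 < lam → lam < 1 →
      ∃ (Q : Finset (E → Ω → ℝ)) (hQ : Q.Nonempty) (δ' lam' : ℝ), ↑Q ⊆ R.sn ∧
        0 < δ' ∧ 0 < lam' ∧ lam' < 1 ∧
        ∀ x : E, ENNReal.ofReal (1 - lam') < μ {ω | Q.sup' hQ (fun p => p x ω) < δ'} →
          ENNReal.ofReal (1 - lam) < μ {ω | ‖f x ω‖ < δ}) := by
  constructor
  · -- Part 1: the countable partition bound
    have hk : ∀ i : ℕ, ∃ (Q : Finset (E → Ω → ℝ)) (hQ : Q.Nonempty) (ξ : Ω → ℝ) (H : Set Ω),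
        ↑Q ⊆ R.sn ∧ Measurable ξ ∧ (∀ᵐ ω ∂μ, 0 ≤ ξ ω) ∧ MeasurableSet H ∧
        μ H ≤ ENNReal.ofReal ((1/2 : ℝ) ^ (i+1)) ∧
        ∀ x : E, ∀ᵐ ω ∂μ, ω ∉ H → ‖f x ω‖ ≤ ξ ω * Q.sup' hQ (fun p => p x ω) := by
      intro i
      have hp0 : (0:ℝ) < (1/2 : ℝ) ^ (i+1) := by positivity
      have hp1 : (1/2 : ℝ) ^ (i+1) < 1 := by
        apply pow_lt_one₀ (by norm_num) (by norm_num)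
        omega
      exact key_localization R f hf hp0 hp1 (hcont 1 _ one_pos hp0 hp1)
    choose Qs hQs ξs Hs sns hξm hξnn hHm hHle hbound using hk
    -- the null residual set
    have hNnull : μ (⋂ i, Hs i) = 0 := by
      have hb : ∀ i : ℕ, μ (⋂ j, Hs j) ≤ ENNReal.ofReal ((1/2 : ℝ) ^ (i+1)) := fun i =>
        le_trans (measure_mono (Set.iInter_subset _ i)) (hHle i)
      have ht : Filter.Tendsto (fun i : ℕ => ENNReal.ofReal ((1/2 : ℝ) ^ (i+1)))
          Filter.atTop (nhds 0) := by
        rw [show (0 : ENNReal) = ENNReal.ofReal 0 by simp]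
        apply ENNReal.tendsto_ofReal
        have h2 := tendsto_pow_atTop_nhds_zero_of_lt_one
          (by norm_num : (0:ℝ) ≤ 1/2) (by norm_num : (1/2:ℝ) < 1)
        exact h2.comp (Filter.tendsto_add_atTop_nat 1)
      exact le_antisymm (ge_of_tendsto ht (Filter.Eventually.of_forall hb)) (zero_le)
    -- the partition
    set B : ℕ → Set Ω := fun i => (⋂ k < i, Hs k) ∩ (Hs i)ᶜ with hB
    set A : ℕ → Set Ω := fun i => if i = 0 then B 0 ∪ (⋂ j, Hs j) else B i with hA
    have hBsub1 : ∀ i, B i ⊆ (Hs i)ᶜ := fun i => Set.inter_subset_right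
    have hBsub2 : ∀ i j, i < j → B j ⊆ Hs i := by
      intro i j hij ω hω
      exact Set.mem_iInter.mp (Set.mem_iInter.mp hω.1 i) hij
    have hBdis : ∀ i j, i < j → ∀ ω, ω ∈ B i → ω ∈ B j → False := by
      intro i j hij ω h1 h2
      exact (hBsub1 i h1) (hBsub2 i j hij h2)
    have hNBdis : ∀ j, ∀ ω, ω ∈ (⋂ k, Hs k) → ω ∈ B j → False := by
      intro j ω h1 h2
      exact (hBsub1 j h2) (Set.mem_iInter.mp h1 j)
    have hAmem : ∀ i ω, ω ∈ A i → ω ∈ B i ∨ (i = 0 ∧ ω ∈ ⋂ j, Hs j) := by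
      intro i ω hω
      simp only [hA] at hω
      by_cases h : i = 0
      · subst h; simp only [if_pos rfl] at hω
        rcases hω with h | h
        · exact Or.inl h
        · exact Or.inr ⟨rfl, h⟩
      · rw [if_neg h] at hω; exact Or.inl hω
    have hAdisj : Pairwise (Function.onFun Disjoint A) := by
      intro i j hij
      rw [Function.onFun]
      rw [Set.disjoint_left]
      intro ω h1 h2
      rcases hAmem i ω h1 with hb1 | ⟨hi0, hn1⟩ <;>
        rcases hAmem j ω h2 with hb2 | ⟨hj0, hn2⟩
      · rcases lt_or_gt_of_ne hij with h | h
        · exact hBdis i j h ω hb1 hb2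
        · exact hBdis j i h ω hb2 hb1
      · exact hNBdis i ω hn2 hb1
      · exact hNBdis j ω hn1 hb2
      · exact hij (hi0.trans hj0.symm)
    have hAcover : (⋃ i, A i) = Set.univ := by
      ext ω
      simp only [Set.mem_iUnion, Set.mem_univ, iff_true]
      by_cases h : ∀ k, ω ∈ Hs k
      · refine ⟨0, ?_⟩
        simp only [hA, if_pos rfl]
        exact Or.inr (Set.mem_iInter.mpr h)
      · push_neg at h
        have hex : ∃ k, ω ∉ Hs k := h
        classical
        let i := Nat.find hex
        have hi1 : ω ∉ Hs i := Nat.find_spec hex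
        have hi2 : ∀ k < i, ω ∈ Hs k := fun k hk => by
          by_contra hc
          exact absurd hk (not_lt.mpr (Nat.find_le hc))
        have hωB : ω ∈ B i := by
          refine ⟨Set.mem_iInter.mpr fun k => Set.mem_iInter.mpr fun hk => hi2 k hk, hi1⟩
        refine ⟨i, ?_⟩
        simp only [hA]
        by_cases h0 : i = 0
        · rw [if_pos h0]; rw [h0] at hωB; exact Or.inl hωB
        · rw [if_neg h0]; exact hωB
    refine ⟨A, ?_, hAdisj, hAcover, ξs, hξm, hξnn, Qs, hQs, sns, ?_⟩
    · intro i
      have hBm : MeasurableSet (B i) :=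
        ((MeasurableSet.iInter fun k => MeasurableSet.iInter fun _ => hHm k)).inter
          (hHm i).compl
      simp only [hA]
      by_cases h : i = 0
      · rw [if_pos h]
        exact ((MeasurableSet.iInter fun k => MeasurableSet.iInter fun _ => hHm k)).inter
          (hHm 0).compl |>.union (MeasurableSet.iInter fun j => hHm j)
      · rw [if_neg h]; exact hBm
    · intro x
      have hae : ∀ᵐ ω ∂μ, ∀ i : ℕ,
          ω ∉ Hs i → ‖f x ω‖ ≤ ξs i ω * (Qs i).sup' (hQs i) (fun p => p x ω) :=
        (MeasureTheory.ae_all_iff).mpr fun i => hbound i x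
      have haeN : ∀ᵐ ω ∂μ, ω ∉ ⋂ j, Hs j := measure_eq_zero_iff_ae_notMem.mp hNnull
      filter_upwards [hae, haeN] with ω hω hωN
      have hex : ∃ n, ω ∈ A n := by
        have := hAcover ▸ Set.mem_univ ω
        exact Set.mem_iUnion.mp ((hAcover.symm ▸ Set.mem_univ ω : ω ∈ ⋃ i, A i))
      obtain ⟨n, hn⟩ := hex
      have hωB : ω ∈ B n := by
        rcases hAmem n ω hn with h | ⟨-, h⟩
        · exact h
        · exact absurd h hωN
      have htsum : (∑' i, (A i).indicator
          (fun ω' => ξs i ω' * (Qs i).sup' (hQs i) fun p => p x ω') ω)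
          = ξs n ω * (Qs n).sup' (hQs n) (fun p => p x ω) := by
        rw [tsum_eq_single n]
        · exact Set.indicator_of_mem hn _
        · intro i hi
          apply Set.indicator_of_notMem
          intro hmem
          exact Set.disjoint_left.mp (hAdisj hi) hmem hn
      rw [htsum]
      exact hω n (hBsub1 n hωB)
  · -- Part 2: (ε,λ)-continuity
    intro δ lam hδ hl0 hl1
    have hl30 : (0:ℝ) < lam / 3 := by linarith
    have hl31 : lam / 3 < 1 := by linarith
    obtain ⟨Q, hQ, ξ, H, hQsn, hξm, hξnn, hHm, hHle, hbd⟩ :=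
      key_localization R f hf hl30 hl31 (hcont 1 _ one_pos hl30 hl31)
    -- choose a uniform bound level for ξ
    obtain ⟨n, hn1, hn2⟩ : ∃ n : ℕ, 1 ≤ n ∧
        μ {ω | (n:ℝ) ≤ ξ ω} < ENNReal.ofReal (lam / 3) := by
      have hmeas : ∀ k : ℕ, MeasurableSet {ω | (k:ℝ) ≤ ξ ω} := fun k =>
        measurableSet_le measurable_const hξm
      have hanti : Antitone (fun k : ℕ => {ω | (k:ℝ) ≤ ξ ω}) := by
        intro i j hij ω hω
        show (i:ℝ) ≤ ξ ω
        exact le_trans (Nat.cast_le.mpr hij) hω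
      have hempty : (⋂ k : ℕ, {ω | (k:ℝ) ≤ ξ ω}) = ∅ := by
        ext ω
        simp only [Set.mem_iInter, Set.mem_setOf_eq, Set.mem_empty_iff_false, iff_false,
          not_forall, not_le]
        obtain ⟨k, hk⟩ := exists_nat_gt (ξ ω)
        exact ⟨k, hk⟩
      have ht := MeasureTheory.tendsto_measure_iInter_atTop
        (fun k => (hmeas k).nullMeasurableSet) hanti ⟨0, measure_ne_top μ _⟩
      rw [hempty, measure_empty] at ht
      have hev := ht.eventually_lt_const (ENNReal.ofReal_pos.mpr hl30)
      obtain ⟨n, hn⟩ := (hev.and (Filter.eventually_ge_atTop 1)).exists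
      exact ⟨n, hn.2, hn.1⟩
    have hnpos : (0:ℝ) < n := by exact_mod_cast hn1
    refine ⟨Q, hQ, δ / n, lam / 3, hQsn, by positivity, hl30, hl31, ?_⟩
    intro x hx
    set G : Set Ω := {ω | Q.sup' hQ (fun p => p x ω) < δ / n} with hG
    have hGm : MeasurableSet G := measurableSet_lt (measurable_supSn R hQ hQsn x) measurable_const
    have hGc : μ Gᶜ < ENNReal.ofReal (lam / 3) := by
      have h1 : μ Gᶜ + ENNReal.ofReal (1 - lam/3) < μ Gᶜ + μ G :=
        ENNReal.add_lt_add_left (measure_ne_top μ _) hx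
      have h2 : μ Gᶜ + μ G = 1 := by
        rw [add_comm, measure_add_measure_compl hGm, measure_univ]
      have h3 : (1 : ENNReal) = ENNReal.ofReal (lam/3) + ENNReal.ofReal (1 - lam/3) := by
        rw [← ENNReal.ofReal_add hl30.le (by linarith)]
        norm_num
      rw [h2, h3] at h1
      exact lt_of_add_lt_add_right h1
    -- the complement of the target event is a.e. inside three small sets
    have hsub : ({ω | ‖f x ω‖ < δ} : Set Ω)ᶜ ≤ᵐ[μ] (H ∪ {ω | (n:ℝ) ≤ ξ ω} ∪ Gᶜ : Set Ω) := by
      have ⟨p₀, hp₀⟩ := hQ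
      filter_upwards [hbd x, R.sn_nonneg p₀ (hQsn hp₀) x] with ω hω hp0 hmem
      by_cases h1 : ω ∈ H
      · exact Or.inl (Or.inl h1)
      by_cases h2 : (n:ℝ) ≤ ξ ω
      · exact Or.inl (Or.inr h2)
      by_cases h3 : ω ∈ G
      · exfalso
        push_neg at h2
        have hsupnn : 0 ≤ Q.sup' hQ (fun p => p x ω) :=
          le_trans hp0 (Finset.le_sup' (fun p => p x ω) hp₀)
        have hb1 : ‖f x ω‖ ≤ ξ ω * Q.sup' hQ (fun p => p x ω) := hω h1
        have hb2 : ξ ω * Q.sup' hQ (fun p => p x ω) < δ := by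
          calc ξ ω * Q.sup' hQ (fun p => p x ω)
              ≤ (n:ℝ) * Q.sup' hQ (fun p => p x ω) :=
                mul_le_mul_of_nonneg_right h2.le hsupnn
            _ < (n:ℝ) * (δ / n) := by
                apply mul_lt_mul_of_pos_left _ hnpos
                exact h3
            _ = δ := by field_simp
        have : ‖f x ω‖ < δ := lt_of_le_of_lt hb1 hb2
        exact hmem this
      · exact Or.inr h3
    have hCc : μ (({ω | ‖f x ω‖ < δ} : Set Ω)ᶜ) < ENNReal.ofReal lam := by
      calc μ (({ω | ‖f x ω‖ < δ} : Set Ω)ᶜ)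
          ≤ μ (H ∪ {ω | (n:ℝ) ≤ ξ ω} ∪ Gᶜ) := measure_mono_ae hsub
        _ ≤ μ (H ∪ {ω | (n:ℝ) ≤ ξ ω}) + μ Gᶜ := measure_union_le _ _
        _ ≤ μ H + μ {ω | (n:ℝ) ≤ ξ ω} + μ Gᶜ :=
            add_le_add_left (measure_union_le _ _) _
        _ < ENNReal.ofReal (lam/3) + ENNReal.ofReal (lam/3) + ENNReal.ofReal (lam/3) := by
            refine ENNReal.add_lt_add_of_le_of_lt (by finiteness) ?_ hGc
            exact le_of_lt (ENNReal.add_lt_add_of_le_of_lt (measure_ne_top μ _) hHle hn2)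
        _ = ENNReal.ofReal lam := by
            rw [← ENNReal.ofReal_add hl30.le hl30.le, ← ENNReal.ofReal_add (by linarith) hl30.le,
              show lam/3 + lam/3 + lam/3 = lam by ring]
    have hCm : MeasurableSet ({ω | ‖f x ω‖ < δ} : Set Ω) :=
      measurableSet_lt (hf.1 x).norm measurable_const
    have h2 : μ ({ω | ‖f x ω‖ < δ} : Set Ω) + μ (({ω | ‖f x ω‖ < δ} : Set Ω)ᶜ) = 1 := by
      rw [measure_add_measure_compl hCm, measure_univ]
    have h3 : ENNReal.ofReal (1 - lam) + ENNReal.ofReal lam = 1 := by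
      rw [← ENNReal.ofReal_add (by linarith) hl0.le]
      norm_num
    have h4 : ENNReal.ofReal (1 - lam) + μ (({ω | ‖f x ω‖ < δ} : Set Ω)ᶜ)
        < μ ({ω | ‖f x ω‖ < δ} : Set Ω) + μ (({ω | ‖f x ω‖ < δ} : Set Ω)ᶜ) := by
      rw [h2, ← h3]
      exact ENNReal.add_lt_add_left (by finiteness) hCc
    exact lt_of_add_lt_add_right h4
end

section
/- Let (E, P) be a random locally convex module over K with base (Ω, F, P). Every module homomorphism f : E → L⁰(F, K) that is continuous for the (ε, λ)-topologies on both sides is also continuous as a map from (E, T_c) to (L⁰(F, K), T_{ε,λ}); hence E*_{ε,λ} ⊆ E*_{max}, and combined with the converse inclusion, E*_{max} = E*_{ε,λ}. -/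
open MeasureTheory

variable {Ω : Type*} [MeasurableSpace Ω] {μ : Measure Ω} {𝕜 : Type*} [RCLike 𝕜]
  {E : Type*} [AddCommGroup E]

/-- Continuity of `f` from `(E, T_{ε,λ})` to `(L⁰(F,𝕜), T_{ε,λ})` at `0`. -/
def ContinuousELtoEL (μ : Measure Ω) (R : RandomLCModule Ω μ 𝕜 E) (f : E → Ω → 𝕜) : Prop :=
  ∀ δ lam : ℝ, 0 < δ → 0 < lam → lam < 1 →
    ∃ (Q : Finset (E → Ω → ℝ)) (hQ : Q.Nonempty) (δ' lam' : ℝ), ↑Q ⊆ R.sn ∧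
      0 < δ' ∧ 0 < lam' ∧ lam' < 1 ∧
      ∀ x : E, ENNReal.ofReal (1 - lam') < μ {ω | Q.sup' hQ (fun p => p x ω) < δ'} →
        ENNReal.ofReal (1 - lam) < μ {ω | ‖f x ω‖ < δ}

/-- Continuity of `f` from `(E, T_c)` to `(L⁰(F,𝕜), T_{ε,λ})` at `0`. -/
def ContinuousTctoEL (μ : Measure Ω) (R : RandomLCModule Ω μ 𝕜 E) (f : E → Ω → 𝕜) : Prop :=
  ∀ δ lam : ℝ, 0 < δ → 0 < lam → lam < 1 →
    ∃ (Q : Finset (E → Ω → ℝ)) (hQ : Q.Nonempty), ↑Q ⊆ R.sn ∧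
      ∃ ε : Ω → ℝ, Measurable ε ∧ (∀ᵐ ω ∂μ, 0 < ε ω) ∧
        ∀ x : E, (∀ᵐ ω ∂μ, Q.sup' hQ (fun p => p x ω) ≤ ε ω) →
          ENNReal.ofReal (1 - lam) < μ {ω | ‖f x ω‖ < δ}

/-- Theorem 1.1: `E*_max = E*_{ε,λ}`. A module homomorphism `f : E → L⁰(F,𝕜)` is continuous
from the `(ε,λ)`-topology on `E` to the topology of convergence in probability iff it is
continuous from the locally `L⁰`-convex topology on `E` to the topology of convergence in
probability. -/
theorem max_conjugate_eq_el_conjugate [IsProbabilityMeasure μ]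
    (R : RandomLCModule Ω μ 𝕜 E) (f : E → Ω → 𝕜) (hf : IsModuleHom μ R f) :
    ContinuousELtoEL μ R f ↔ ContinuousTctoEL μ R f := by
  obtain ⟨hmeas, _hadd, hsmul⟩ := hf
  constructor
  · -- EL→EL continuity implies Tc→EL continuity
    intro hEL δ lam hδ hlam hlam1
    obtain ⟨Q, hQ, δ', lam', hQsub, hδ', hlam', hlam'1, hcont⟩ := hEL δ lam hδ hlam hlam1
    refine ⟨Q, hQ, hQsub, fun _ => δ' / 2, measurable_const,
      Filter.Eventually.of_forall (fun ω => by positivity), ?_⟩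
    intro x hx
    apply hcont
    have h1 : ∀ᵐ ω ∂μ, ω ∈ {ω | Q.sup' hQ (fun p => p x ω) < δ'} :=
      hx.mono fun ω h => lt_of_le_of_lt h (by linarith)
    have h2 : (1 : ENNReal) ≤ μ {ω | Q.sup' hQ (fun p => p x ω) < δ'} := by
      have h0 : μ {ω | Q.sup' hQ (fun p => p x ω) < δ'}ᶜ = 0 := by
        rw [ae_iff] at h1; exact h1
      calc (1:ENNReal) = μ Set.univ := (measure_univ).symm
        _ ≤ μ {ω | Q.sup' hQ (fun p => p x ω) < δ'}
              + μ {ω | Q.sup' hQ (fun p => p x ω) < δ'}ᶜ := by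
            rw [← Set.union_compl_self {ω | Q.sup' hQ (fun p => p x ω) < δ'}]
            exact measure_union_le _ _
        _ = μ {ω | Q.sup' hQ (fun p => p x ω) < δ'} := by rw [h0, add_zero]
    exact lt_of_lt_of_le (ENNReal.ofReal_lt_one.mpr (by linarith)) h2
  · -- Tc→EL continuity implies EL→EL continuity
    intro hTc δ lam hδ hlam hlam1
    obtain ⟨Q, hQ, hQsub, ε, hεmeas, hεpos, hcont⟩ :=
      hTc δ (lam / 2) hδ (by linarith) (by linarith)
    -- choose δ' = 1/(n+1) with μ {ε < δ'} < ofReal (lam/4)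
    have hnull : μ {ω | ε ω ≤ 0} = 0 := by
      have := hεpos
      rw [ae_iff] at this
      simpa [not_lt] using this
    have hanti : Antitone (fun n : ℕ => {ω | ε ω < 1 / (n + 1 : ℝ)}) := by
      intro m n hmn ω hω
      have h1 : (1 : ℝ) / (n + 1) ≤ 1 / (m + 1) := by
        apply one_div_le_one_div_of_le (by positivity)
        exact_mod_cast by omega
      exact lt_of_lt_of_le hω h1
    have hinter : (⋂ n : ℕ, {ω | ε ω < 1 / (n + 1 : ℝ)}) = {ω | ε ω ≤ 0} := by
      ext ω
      simp only [Set.mem_iInter, Set.mem_setOf_eq]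
      constructor
      · intro h
        by_contra hc
        push_neg at hc
        obtain ⟨n, hn⟩ := exists_nat_one_div_lt hc
        exact absurd (h n) (not_lt.mpr hn.le)
      · intro h n
        exact lt_of_le_of_lt h (by positivity)
    have htend := tendsto_measure_iInter_atTop
      (s := fun n : ℕ => {ω | ε ω < 1 / (n + 1 : ℝ)})
      (fun n => (hεmeas measurableSet_Iio).nullMeasurableSet) hanti
      ⟨0, measure_ne_top μ _⟩
    rw [hinter, hnull] at htend
    have hev : ∀ᶠ n : ℕ in Filter.atTop,
        μ {ω | ε ω < 1 / (n + 1 : ℝ)} < ENNReal.ofReal (lam / 4) := by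
      have : (0 : ENNReal) < ENNReal.ofReal (lam / 4) := ENNReal.ofReal_pos.mpr (by linarith)
      exact htend.eventually_lt_const this
    obtain ⟨n, hn⟩ := hev.exists
    refine ⟨Q, hQ, 1 / (n + 1 : ℝ), lam / 4, hQsub, by positivity, by linarith, by linarith, ?_⟩
    intro x hx
    set δ' : ℝ := 1 / (n + 1 : ℝ) with hδ'def
    have hδ'pos : 0 < δ' := by positivity
    -- A : the set where the seminorms are small; B : additionally ε ≥ δ'
    set A : Set Ω := {ω | Q.sup' hQ (fun p => p x ω) < δ'} with hAdef
    have hAmeas : MeasurableSet A := by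
      have hsup : Measurable (Q.sup' hQ (fun p => p x)) :=
        Finset.measurable_sup' hQ (fun p hp => R.sn_meas p (hQsub hp) x)
      have : A = {ω | (Q.sup' hQ fun p => p x) ω < δ'} := by
        ext ω; simp [hAdef, Finset.sup'_apply]
      rw [this]
      exact measurableSet_lt hsup measurable_const
    set B : Set Ω := A ∩ {ω | δ' ≤ ε ω} with hBdef
    have hBmeas : MeasurableSet B :=
      hAmeas.inter (measurableSet_le measurable_const hεmeas)
    set ξ : Ω → 𝕜 := B.indicator (fun _ => (1 : 𝕜)) with hξdef
    have hξmeas : Measurable ξ := measurable_const.indicator hBmeas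
    -- the seminorms of ξ • x are a.e. bounded by ε
    have hae : ∀ᵐ ω ∂μ, ∀ p ∈ Q, p (R.smul ξ x) ω = ‖ξ ω‖ * p x ω := by
      have h := (Filter.eventually_all_finite Q.finite_toSet (l := MeasureTheory.ae μ)
        (p := fun p ω => p (R.smul ξ x) ω = ‖ξ ω‖ * p x ω)).2
        (fun p hp => R.sn_smul p (hQsub hp) ξ x hξmeas)
      exact h.mono (fun ω h p hp => h p hp)
    have hkey : ∀ᵐ ω ∂μ, Q.sup' hQ (fun p => p (R.smul ξ x) ω) ≤ ε ω := by
      filter_upwards [hae, hεpos] with ω hω hεω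
      apply Finset.sup'_le
      intro p hp
      rw [hω p hp]
      by_cases hωB : ω ∈ B
      · have : ξ ω = 1 := by simp [hξdef, hωB]
        rw [this]
        simp only [norm_one, one_mul]
        have h1 : p x ω ≤ Q.sup' hQ (fun q => q x ω) := Finset.le_sup' (fun q => q x ω) hp
        have h2 : Q.sup' hQ (fun q => q x ω) < δ' := hωB.1
        have h3 : δ' ≤ ε ω := hωB.2
        linarith
      · have : ξ ω = 0 := by simp [hξdef, hωB]
        rw [this]
        simpa using hεω.le
    have hout := hcont (R.smul ξ x) hkey
    -- relate f (ξ • x) to f x on B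
    have hfx : f (R.smul ξ x) =ᵐ[μ] ξ * f x := hsmul ξ x hξmeas
    set S : Set Ω := {ω | ‖f x ω‖ < δ} with hSdef
    set T : Set Ω := {ω | ‖f (R.smul ξ x) ω‖ < δ} with hTdef
    have hTB : μ (T ∩ B) ≤ μ S := by
      apply measure_mono_ae
      filter_upwards [hfx] with ω hω hωTB
      have hωB : ω ∈ B := hωTB.2
      have hξ1 : ξ ω = 1 := by simp [hξdef, hωB]
      have : f (R.smul ξ x) ω = f x ω := by
        rw [hω]; simp [hξ1]
      have hT : ‖f (R.smul ξ x) ω‖ < δ := hωTB.1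
      rw [this] at hT
      exact hT
    have hTle : μ T ≤ μ S + μ Aᶜ + μ {ω | ε ω < δ'} := by
      have hsub : T ⊆ (T ∩ B) ∪ (Aᶜ ∪ {ω | ε ω < δ'}) := by
        intro ω hω
        by_cases hωB : ω ∈ B
        · exact Or.inl ⟨hω, hωB⟩
        · right
          by_cases hωA : ω ∈ A
          · right
            simp only [Set.mem_setOf_eq]
            by_contra hεω
            push_neg at hεω
            exact hωB ⟨hωA, hεω⟩
          · exact Or.inl hωA
      calc μ T ≤ μ ((T ∩ B) ∪ (Aᶜ ∪ {ω | ε ω < δ'})) := measure_mono hsub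
        _ ≤ μ (T ∩ B) + μ (Aᶜ ∪ {ω | ε ω < δ'}) := measure_union_le _ _
        _ ≤ μ (T ∩ B) + (μ Aᶜ + μ {ω | ε ω < δ'}) := by
            gcongr; exact measure_union_le _ _
        _ ≤ μ S + (μ Aᶜ + μ {ω | ε ω < δ'}) := by gcongr
        _ = μ S + μ Aᶜ + μ {ω | ε ω < δ'} := (add_assoc _ _ _).symm
    -- conclude by contradiction with ENNReal arithmetic
    by_contra hS
    push_neg at hS
    have hAA : μ A + μ Aᶜ = 1 := by
      rw [measure_add_measure_compl hAmeas]; exact measure_univ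
    have hupper : ENNReal.ofReal (1 - lam / 2) + μ A <
        ENNReal.ofReal (1 - lam) + 1 + ENNReal.ofReal (lam / 4) := by
      calc ENNReal.ofReal (1 - lam / 2) + μ A
          < μ T + μ A := by
            exact ENNReal.add_lt_add_right (measure_ne_top μ A) hout
        _ ≤ (μ S + μ Aᶜ + μ {ω | ε ω < δ'}) + μ A := by gcongr
        _ = μ S + (μ A + μ Aᶜ) + μ {ω | ε ω < δ'} := by ring
        _ = μ S + 1 + μ {ω | ε ω < δ'} := by rw [hAA]
        _ ≤ ENNReal.ofReal (1 - lam) + 1 + ENNReal.ofReal (lam / 4) := by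
            gcongr
    have hlower : ENNReal.ofReal (1 - lam / 2) + ENNReal.ofReal (1 - lam / 4) ≤
        ENNReal.ofReal (1 - lam / 2) + μ A := by gcongr
    have heq1 : ENNReal.ofReal (1 - lam / 2) + ENNReal.ofReal (1 - lam / 4) =
        ENNReal.ofReal (2 - 3 * lam / 4) := by
      rw [← ENNReal.ofReal_add (by linarith) (by linarith)]
      congr 1
      ring
    have heq2 : ENNReal.ofReal (1 - lam) + 1 + ENNReal.ofReal (lam / 4) =
        ENNReal.ofReal (2 - 3 * lam / 4) := by
      rw [show (1 : ENNReal) = ENNReal.ofReal 1 by simp,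
        ← ENNReal.ofReal_add (by linarith) (by norm_num),
        ← ENNReal.ofReal_add (by linarith) (by linarith)]
      congr 1
      ring
    rw [heq1] at hlower
    rw [heq2] at hupper
    exact absurd (lt_of_le_of_lt hlower hupper) (lt_irrefl _)
end

section
/- On a probability space whose σ-algebra is (up to null sets) generated by finitely many atoms, the locally L⁰-convex topology on L⁰(F, K) coincides with the topology of convergence in probability. -/
open MeasureTheory

/-- On a probability space whose σ-algebra is, up to null sets, generated by finitely many
disjoint atoms, the locally `L⁰`-convex topology on `L⁰(F,𝕜)` coincides with the topology of
convergence in probability: the two neighborhood bases at `0` are mutually finer. -/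
theorem tc_eq_probability_topology_of_finitely_many_atoms {Ω : Type*} [MeasurableSpace Ω]
    (μ : Measure Ω) [IsProbabilityMeasure μ] (𝕜 : Type*) [RCLike 𝕜]
    (n : ℕ) (A : Fin n → Set Ω) (hatom : ∀ i, IsPAtom μ (A i))
    (hdisj : Pairwise (Function.onFun Disjoint A))
    (hgen : ∀ B : Set Ω, MeasurableSet B →
      ∃ S : Finset (Fin n), μ (symmDiff B (⋃ i ∈ S, A i)) = 0) :
    (∀ ε : Ω → ℝ, Measurable ε → (∀ᵐ ω ∂μ, 0 < ε ω) →
      ∃ δ lam : ℝ, 0 < δ ∧ 0 < lam ∧ lam < 1 ∧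
        ∀ ξ : Ω → 𝕜, Measurable ξ → ENNReal.ofReal (1 - lam) < μ {ω | ‖ξ ω‖ < δ} →
          ∀ᵐ ω ∂μ, ‖ξ ω‖ ≤ ε ω) ∧
    (∀ δ lam : ℝ, 0 < δ → 0 < lam → lam < 1 →
      ∃ ε : Ω → ℝ, Measurable ε ∧ (∀ᵐ ω ∂μ, 0 < ε ω) ∧
        ∀ ξ : Ω → 𝕜, Measurable ξ → (∀ᵐ ω ∂μ, ‖ξ ω‖ ≤ ε ω) →
          ENNReal.ofReal (1 - lam) < μ {ω | ‖ξ ω‖ < δ}) := by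
  constructor
  · intro ε hεm hεpos
    -- `Fin n` is nonempty
    have hne : Nonempty (Fin n) := by
      by_contra h
      rw [not_nonempty_iff] at h
      obtain ⟨S, hS⟩ := hgen Set.univ MeasurableSet.univ
      have hSe : S = ∅ := Finset.eq_empty_of_isEmpty S
      simp [hSe, symmDiff_def] at hS
    -- minimal atom measure
    obtain ⟨i₀, -, hmin⟩ := Finset.exists_min_image Finset.univ (fun i => μ (A i))
      ⟨Classical.arbitrary _, Finset.mem_univ _⟩
    set q : ENNReal := μ (A i₀) with hq
    have hq0 : 0 < q := (hatom i₀).2.1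
    have hq1 : q ≤ 1 := prob_le_one
    have hqt : q ≠ ⊤ := ne_top_of_le_ne_top ENNReal.one_ne_top hq1
    -- gap lemma
    have gap : ∀ B : Set Ω, MeasurableSet B → μ B < q → μ B = 0 := by
      intro B hB hBq
      obtain ⟨S, hS⟩ := hgen B hB
      have hBU : μ B = μ (⋃ i ∈ S, A i) :=
        measure_congr ((measure_symmDiff_eq_zero_iff).1 hS)
      rcases S.eq_empty_or_nonempty with rfl | ⟨j, hj⟩
      · simpa using hBU
      · exfalso
        have h1 : q ≤ μ (A j) := hmin j (Finset.mem_univ j)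
        have h2 : μ (A j) ≤ μ (⋃ i ∈ S, A i) :=
          measure_mono (Set.subset_biUnion_of_mem hj)
        rw [hBU] at hBq
        exact absurd (h1.trans h2) (not_le_of_gt hBq)
    -- decreasing sets {ε < 1/(k+1)}
    set s : ℕ → Set Ω := fun k => {ω | ε ω < 1 / (k + 1 : ℝ)} with hs
    have hsm : ∀ k, MeasurableSet (s k) := fun k => hεm measurableSet_Iio
    have hanti : Antitone s := by
      intro k l hkl ω hω
      have hk1 : (0:ℝ) < (k:ℝ) + 1 := by positivity
      have : (1 : ℝ) / (l + 1) ≤ 1 / (k + 1) := by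
        apply one_div_le_one_div_of_le hk1
        exact_mod_cast Nat.succ_le_succ hkl
      exact lt_of_lt_of_le hω this
    have hinter : (⋂ k, s k) = {ω | ε ω ≤ 0} := by
      ext ω
      simp only [Set.mem_iInter, hs, Set.mem_setOf_eq]
      constructor
      · intro h
        by_contra hpos
        push_neg at hpos
        obtain ⟨k, hk⟩ := exists_nat_one_div_lt hpos
        exact absurd (h k) (not_lt_of_gt hk)
      · intro h k
        have : (0:ℝ) < 1 / (k + 1) := by positivity
        linarith
    have hnull : μ (⋂ k, s k) = 0 := by
      rw [hinter]
      rw [ae_iff] at hεpos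
      apply measure_mono_null _ hεpos
      intro ω hω
      simp only [Set.mem_setOf_eq] at *
      exact not_lt.2 hω
    have htend : Filter.Tendsto (fun k => μ (s k)) Filter.atTop (nhds 0) := by
      have := tendsto_measure_iInter_atTop (fun k => (hsm k).nullMeasurableSet) hanti
        ⟨0, measure_ne_top μ _⟩
      rwa [hnull] at this
    obtain ⟨k, hk⟩ := (htend.eventually_lt_const hq0).exists
    have hsk0 : μ (s k) = 0 := gap _ (hsm k) hk
    refine ⟨1 / (k + 1 : ℝ), q.toReal / 2, by positivity, ?_, ?_, ?_⟩
    · have := ENNReal.toReal_pos hq0.ne' hqt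
      positivity
    · have h1 : q.toReal ≤ 1 := by
        simpa using ENNReal.toReal_mono ENNReal.one_ne_top hq1
      linarith
    · intro ξ hξm hξ
      set δ : ℝ := 1 / (k + 1 : ℝ) with hδ
      have hC : μ {ω | ¬ ‖ξ ω‖ < δ} = 0 := by
        by_contra hC0
        have hCm : MeasurableSet {ω | ¬ ‖ξ ω‖ < δ} :=
          (hξm.norm measurableSet_Iio).compl
        have hCq : q ≤ μ {ω | ¬ ‖ξ ω‖ < δ} := by
          by_contra h
          exact hC0 (gap _ hCm (not_le.1 h))
        have hcompl : {ω | ‖ξ ω‖ < δ} = {ω | ¬ ‖ξ ω‖ < δ}ᶜ := by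
          ext ω; simp
        have hle : μ {ω | ‖ξ ω‖ < δ} ≤ 1 - q := by
          rw [hcompl, measure_compl hCm (measure_ne_top μ _)]
          simp only [measure_univ]
          exact tsub_le_tsub le_rfl hCq
        have h1q : (1 : ENNReal) - q ≤ ENNReal.ofReal (1 - q.toReal / 2) := by
          have : (1 : ENNReal) - q = ENNReal.ofReal (1 - q.toReal) := by
            rw [ENNReal.ofReal_sub _ ENNReal.toReal_nonneg,
              ENNReal.ofReal_toReal hqt, ENNReal.ofReal_one]
          rw [this]
          apply ENNReal.ofReal_le_ofReal
          have := ENNReal.toReal_nonneg (a := q)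
          linarith
        exact absurd hξ (not_lt.2 (hle.trans h1q))
      have hεδ : ∀ᵐ ω ∂μ, ¬ ε ω < δ := by
        rw [ae_iff]; simp only [not_not]; exact hsk0
      have hξδ : ∀ᵐ ω ∂μ, ‖ξ ω‖ < δ := by
        rw [ae_iff]; exact hC
      filter_upwards [hεδ, hξδ] with ω h1 h2
      exact le_of_lt (lt_of_lt_of_le h2 (not_lt.1 h1))
  · intro δ lam hδ hlam hlam1
    refine ⟨fun _ => δ / 2, measurable_const,
      Filter.Eventually.of_forall (fun _ => half_pos hδ), ?_⟩
    intro ξ hξm hle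
    have h1 : μ {ω | ‖ξ ω‖ < δ} = 1 := by
      have hc : μ {ω | ‖ξ ω‖ < δ}ᶜ = 0 := by
        have : ∀ᵐ ω ∂μ, ‖ξ ω‖ < δ :=
          hle.mono (fun ω h => lt_of_le_of_lt h (by linarith))
        rw [ae_iff] at this
        apply measure_mono_null _ this
        intro ω hω
        simpa using hω
      exact (prob_compl_eq_zero_iff (hξm.norm measurableSet_Iio)).1 hc
    rw [h1]
    exact ENNReal.ofReal_lt_one.2 (by linarith)
end
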